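/- arXiv:2201.06487 — 10 statements merged into one kernel-verified Lean document; each statement's English description precedes it below -/
import Mathlib

section
/- Weak duality for the worst-case 0-1 loss: for every classification rule h ∈ T(X,Y) and every μ ∈ ℝ^m, sup_{p ∈ U} ℓ(h,p) ≤ 1 − τᵀμ + sup_{(x,y) ∈ X×Y} { Φ(x,y)ᵀμ − h(y|x) } + λᵀ|μ|; consequently sup_{p ∈ U} ℓ(h,p) ≤ inf_{μ ∈ ℝ^m} [ 1 − τᵀμ + sup_{(x,y) ∈ X×Y} { Φ(x,y)ᵀμ − h(y|x) } + λᵀ|μ| ]. -/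
open MeasureTheory

noncomputable section

/-- A (randomized) classification rule: for each instance `x` in the Borel set `Xs ⊆ ℝ^d`,
`h x` is a probability distribution over the labels `Fin K`, measurably in `x`. -/
def IsRule {d K : ℕ} (Xs : Set (Fin d → ℝ)) (h : ↥Xs → Fin K → ℝ) : Prop :=
  (∀ x y, 0 ≤ h x y) ∧ (∀ x, ∑ y, h x y = 1) ∧ ∀ y, Measurable fun x => h x y

/-- Expected 0-1 loss of a rule `h` w.r.t. a distribution `p` on instance-label pairs. -/
def loss {d K : ℕ} {Xs : Set (Fin d → ℝ)} (h : ↥Xs → Fin K → ℝ)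
    (p : Measure (↥Xs × Fin K)) : ℝ :=
  ∫ z, (1 - h z.1 z.2) ∂p

/-- Uncertainty set of distributions with feature expectations within `lam` of `τ`. -/
def Unc {d K m : ℕ} {Xs : Set (Fin d → ℝ)} (Φ : ↥Xs × Fin K → Fin m → ℝ)
    (τ lam : Fin m → ℝ) : Set (Measure (↥Xs × Fin K)) :=
  {p | IsProbabilityMeasure p ∧ ∀ i, |(∫ z, Φ z i ∂p) - τ i| ≤ lam i}

/-- Dual objective `1 - τᵀμ + sup_{(x,y)} {Φ(x,y)ᵀμ - h(y|x)} + λᵀ|μ|`. -/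
def Dup {d K m : ℕ} {Xs : Set (Fin d → ℝ)} (Φ : ↥Xs × Fin K → Fin m → ℝ)
    (τ lam : Fin m → ℝ) (h : ↥Xs → Fin K → ℝ) (μ : Fin m → ℝ) : ℝ :=
  1 - (∑ i, τ i * μ i)
    + (⨆ z : ↥Xs × Fin K, ((∑ i, Φ z i * μ i) - h z.1 z.2))
    + ∑ i, lam i * |μ i|

/-! For `p ∈ U`, integrating the pointwise bound `Φ(z)ᵀμ - h(z) ≤ sup_z {Φ(z)ᵀμ - h(z)}` gives
`E_p[Φ]ᵀμ - E_p[h] ≤ sup_z {Φ(z)ᵀμ - h(z)}` (a genuine supremum, not the junk value of `⨆`,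
since `Φ` is bounded and `h ≥ 0`), and `(τ - E_p[Φ])ᵀμ ≤ λᵀ|μ|` because
`|E_p[Φ] - τ| ⪯ λ`. Adding the two bounds to `ℓ(h,p) = 1 - E_p[h]` gives the first claim;
the second follows by taking the infimum over `μ`. -/

theorem Finset.sum_mul_le_sum_mul_abs {ι : Type*} (s : Finset ι) {a c : ι → ℝ}
    (hac : ∀ i ∈ s, |a i| ≤ c i) (μ : ι → ℝ) :
    ∑ i ∈ s, a i * μ i ≤ ∑ i ∈ s, c i * |μ i| :=
  Finset.sum_le_sum fun i hi => calc
    a i * μ i ≤ |a i| * |μ i| := (le_abs_self _).trans (abs_mul _ _).le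
    _ ≤ c i * |μ i| := mul_le_mul_of_nonneg_right (hac i hi) (abs_nonneg _)

section

variable {α ι : Type*}

theorem bddAbove_range_sum_mul_sub (s : Finset ι) {Φ : α → ι → ℝ} {B : ℝ}
    (hΦ : ∀ z i, |Φ z i| ≤ B) {g : α → ℝ} (hg : ∀ z, 0 ≤ g z) (μ : ι → ℝ) :
    BddAbove (Set.range fun z => ∑ i ∈ s, Φ z i * μ i - g z) := by
  refine ⟨∑ i ∈ s, B * |μ i|, ?_⟩
  rintro _ ⟨z, rfl⟩
  linarith [hg z, s.sum_mul_le_sum_mul_abs (fun i _ => hΦ z i) μ]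

variable [MeasurableSpace α] {p : Measure α} [IsProbabilityMeasure p]

theorem integral_sub_integral_le_of_forall_sub_le {F g : α → ℝ} {S : ℝ}
    (hF : Integrable F p) (hg : Integrable g p) (hS : ∀ z, F z - g z ≤ S) :
    ∫ z, F z ∂p - ∫ z, g z ∂p ≤ S := by
  rw [← integral_sub hF hg]
  calc ∫ z, F z - g z ∂p ≤ ∫ _, S ∂p := integral_mono (hF.sub hg) (integrable_const S) hS
    _ = S := by simp

theorem sum_integral_mul_sub_integral_le_iSup [Fintype ι] {Φ : α → ι → ℝ}
    (hΦ : ∀ i, Integrable (fun z => Φ z i) p) {g : α → ℝ} (hg : Integrable g p)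
    (hbdd : ∀ μ : ι → ℝ, BddAbove (Set.range fun z => ∑ i, Φ z i * μ i - g z)) (μ : ι → ℝ) :
    ∑ i, (∫ z, Φ z i ∂p) * μ i - ∫ z, g z ∂p ≤ ⨆ z, (∑ i, Φ z i * μ i - g z) := by
  have hΦμ : ∀ i ∈ Finset.univ, Integrable (fun z => Φ z i * μ i) p :=
    fun i _ => (hΦ i).mul_const (μ i)
  simp_rw [← integral_mul_const, ← integral_finsetSum _ hΦμ]
  exact integral_sub_integral_le_of_forall_sub_le (integrable_finsetSum _ hΦμ) hg
    fun z => le_ciSup (hbdd μ) z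

end

namespace IsRule

variable {d K : ℕ} {Xs : Set (Fin d → ℝ)} {h : ↥Xs → Fin K → ℝ}

theorem le_one (hrule : IsRule Xs h) (x : ↥Xs) (y : Fin K) : h x y ≤ 1 :=
  (Finset.single_le_sum (fun i _ => hrule.1 x i) (Finset.mem_univ y)).trans_eq (hrule.2.1 x)

theorem integrable_uncurry (hrule : IsRule Xs h) (p : Measure (↥Xs × Fin K))
    [IsFiniteMeasure p] : Integrable (fun z : ↥Xs × Fin K => h z.1 z.2) p := by
  refine .of_bound ?_ 1 (ae_of_all _ fun z => ?_)
  · exact (measurable_from_prod_countable_left fun y => hrule.2.2 y).aestronglyMeasurable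
  · rw [Real.norm_eq_abs, abs_le]
    exact ⟨by linarith [hrule.1 z.1 z.2], hrule.le_one z.1 z.2⟩

end IsRule

theorem loss_le_Dup {d K m : ℕ} {Xs : Set (Fin d → ℝ)} {Φ : ↥Xs × Fin K → Fin m → ℝ}
    (hΦmeas : ∀ i, Measurable fun z => Φ z i) {B : ℝ} (hΦbdd : ∀ z i, |Φ z i| ≤ B)
    {τ lam : Fin m → ℝ} {h : ↥Xs → Fin K → ℝ} (hrule : IsRule Xs h) (μ : Fin m → ℝ)
    {p : Measure (↥Xs × Fin K)} (hp : p ∈ Unc Φ τ lam) :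
    loss h p ≤ Dup Φ τ lam h μ := by
  obtain ⟨hprob, hmoment⟩ := hp
  have hΦint : ∀ i, Integrable (fun z => Φ z i) p := fun i =>
    .of_bound (hΦmeas i).aestronglyMeasurable B
      (ae_of_all _ fun z => (Real.norm_eq_abs _).trans_le (hΦbdd z i))
  have hhint := hrule.integrable_uncurry p
  have hloss : loss h p = 1 - ∫ z, h z.1 z.2 ∂p := by
    rw [loss, integral_sub (integrable_const 1) hhint]
    simp
  have hsup : ∑ i, (∫ z, Φ z i ∂p) * μ i - ∫ z, h z.1 z.2 ∂p ≤
      ⨆ z : ↥Xs × Fin K, (∑ i, Φ z i * μ i - h z.1 z.2) :=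
    sum_integral_mul_sub_integral_le_iSup hΦint hhint
      (bddAbove_range_sum_mul_sub _ hΦbdd fun z => hrule.1 z.1 z.2) μ
  have hdev : ∑ i, (τ i - ∫ z, Φ z i ∂p) * μ i ≤ ∑ i, lam i * |μ i| :=
    Finset.univ.sum_mul_le_sum_mul_abs (fun i _ => abs_sub_comm (τ i) _ ▸ hmoment i) μ
  simp only [sub_mul, Finset.sum_sub_distrib] at hdev
  rw [hloss, Dup]
  linarith

theorem stmt_0_general {d K m : ℕ}
    (Xs : Set (Fin d → ℝ))
    (Φ : ↥Xs × Fin K → Fin m → ℝ) (hΦmeas : ∀ i, Measurable fun z => Φ z i)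
    (B : ℝ) (hΦbdd : ∀ z i, |Φ z i| ≤ B)
    (τ lam : Fin m → ℝ)
    (h : ↥Xs → Fin K → ℝ) (hrule : IsRule Xs h) :
    (∀ μ : Fin m → ℝ, ∀ p ∈ Unc Φ τ lam, loss h p ≤ Dup Φ τ lam h μ) ∧
    (∀ p ∈ Unc Φ τ lam, loss h p ≤ ⨅ μ : Fin m → ℝ, Dup Φ τ lam h μ) :=
  ⟨fun μ _ hp => loss_le_Dup hΦmeas hΦbdd hrule μ hp,
    fun _ hp => le_ciInf fun μ => loss_le_Dup hΦmeas hΦbdd hrule μ hp⟩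

/-- Weak duality for the worst-case 0-1 loss. -/
theorem stmt_0 {d K m : ℕ} (hK : 0 < K)
    (Xs : Set (Fin d → ℝ)) (hXs : MeasurableSet Xs)
    (Φ : ↥Xs × Fin K → Fin m → ℝ) (hΦmeas : ∀ i, Measurable fun z => Φ z i)
    (B : ℝ) (hΦbdd : ∀ z i, |Φ z i| ≤ B)
    (τ lam : Fin m → ℝ)
    (h : ↥Xs → Fin K → ℝ) (hrule : IsRule Xs h) :
    (∀ μ : Fin m → ℝ, ∀ p ∈ Unc Φ τ lam, loss h p ≤ Dup Φ τ lam h μ) ∧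
    (∀ p ∈ Unc Φ τ lam, loss h p ≤ ⨅ μ : Fin m → ℝ, Dup Φ τ lam h μ) :=
  stmt_0_general Xs Φ hΦmeas B hΦbdd τ lam h hrule

end
end

section
/- For every μ ∈ ℝ^m and every x ∈ X, the sum over labels of the positive part of the affine transform of the feature mapping is at most one: ∑_{y ∈ Y} max(Φ(x,y)ᵀμ − φ(μ), 0) ≤ 1. Consequently, for any μ there exists a classification rule h satisfying h(y|x) ≥ Φ(x,y)ᵀμ − φ(μ) for all x ∈ X and y ∈ Y. -/
/-!
Fix `x` and let `C` be the set of labels `y` with `Φ(x,y)ᵀμ > φ(μ)`. If `C` is nonempty it is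
one of the competitors in the supremum defining `φ(μ)`, so `∑_{y∈C} Φ(x,y)ᵀμ - 1 ≤ |C| φ(μ)`,
which says exactly that the positive parts sum to at most one; boundedness of `Φ` is what keeps
the supremum finite (an unbounded `⨆` of reals is `0`). Spreading the missing mass
`1 - ∑ max(Φᵀμ - φ(μ), 0)` uniformly over the labels then gives a classification rule.
-/

open MeasureTheory

noncomputable section

/-- `φ(μ) = sup_{x ∈ X, ∅ ≠ C ⊆ Y} ((∑_{y∈C} Φ(x,y)ᵀμ) - 1)/|C|`. -/
def phi {d K m : ℕ} {Xs : Set (Fin d → ℝ)} (Φ : ↥Xs × Fin K → Fin m → ℝ)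
    (μ : Fin m → ℝ) : ℝ :=
  ⨆ (x : ↥Xs) (C : {C : Finset (Fin K) // C.Nonempty}),
    ((∑ y ∈ C.1, ∑ i, Φ (x, y) i * μ i) - 1) / (C.1.card : ℝ)

theorem sum_max_sub_zero_le_one_of_forall_finset {ι : Type*} [Fintype ι] (a : ι → ℝ) (c : ℝ)
    (h : ∀ C : Finset ι, C.Nonempty → (∑ y ∈ C, a y) - 1 ≤ C.card * c) :
    ∑ y, max (a y - c) 0 ≤ 1 := by
  classical
  set C := Finset.univ.filter fun y => c < a y
  have hsum : ∑ y, max (a y - c) 0 = ∑ y ∈ C, (a y - c) := by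
    rw [Finset.sum_filter]
    refine Finset.sum_congr rfl fun y _ => ?_
    split_ifs with hy
    · exact max_eq_left (sub_nonneg.mpr hy.le)
    · exact max_eq_right (sub_nonpos.mpr (not_lt.mp hy))
  rw [hsum, Finset.sum_sub_distrib, Finset.sum_const, nsmul_eq_mul]
  rcases C.eq_empty_or_nonempty with hC | hC
  · simp [hC]
  · linarith [h C hC]

theorem sum_mul_le_of_abs_le {ι : Type*} [Fintype ι] {B : ℝ} (v μ : ι → ℝ)
    (hv : ∀ i, |v i| ≤ B) :
    ∑ i, v i * μ i ≤ ∑ i, B * |μ i| :=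
  Finset.sum_le_sum fun i _ => calc
    v i * μ i ≤ |v i| * |μ i| := by rw [← abs_mul]; exact le_abs_self _
    _ ≤ B * |μ i| := mul_le_mul_of_nonneg_right (hv i) (abs_nonneg _)

theorem sum_sub_one_le_card_mul_phi {d K m : ℕ} {Xs : Set (Fin d → ℝ)}
    {Φ : ↥Xs × Fin K → Fin m → ℝ} {B : ℝ} (hΦbdd : ∀ z i, |Φ z i| ≤ B) (μ : Fin m → ℝ)
    (x : ↥Xs) (C : Finset (Fin K)) (hC : C.Nonempty) :
    (∑ y ∈ C, ∑ i, Φ (x, y) i * μ i) - 1 ≤ C.card * phi Φ μ := by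
  have hbdd : ∀ (x : ↥Xs) (C : {C : Finset (Fin K) // C.Nonempty}),
      ((∑ y ∈ C.1, ∑ i, Φ (x, y) i * μ i) - 1) / (C.1.card : ℝ) ≤ ∑ i, B * |μ i| := by
    intro x C
    have hcard : (0 : ℝ) < C.1.card := by exact_mod_cast C.2.card_pos
    have hsum : ∑ y ∈ C.1, ∑ i, Φ (x, y) i * μ i ≤ C.1.card * ∑ i, B * |μ i| := by
      simpa using Finset.sum_le_sum fun y (_ : y ∈ C.1) =>
        sum_mul_le_of_abs_le _ μ (hΦbdd (x, y))
    rw [div_le_iff₀ hcard]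
    linarith
  have hle := le_ciSup₂ (f := fun (x : ↥Xs) (C : {C : Finset (Fin K) // C.Nonempty}) =>
      ((∑ y ∈ C.1, ∑ i, Φ (x, y) i * μ i) - 1) / (C.1.card : ℝ))
    ⟨_, by rintro _ ⟨_, ⟨x, rfl⟩, C, rfl⟩; exact hbdd x C⟩ x ⟨C, hC⟩
  have hcard : (0 : ℝ) < C.card := by exact_mod_cast hC.card_pos
  exact (div_le_iff₀' hcard).mp hle

theorem exists_isRule_ge {d K : ℕ} (hK : 0 < K) (Xs : Set (Fin d → ℝ)) (g : ↥Xs → Fin K → ℝ)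
    (hg_nonneg : ∀ x y, 0 ≤ g x y) (hg_sum : ∀ x, ∑ y, g x y ≤ 1)
    (hg_meas : ∀ y, Measurable fun x => g x y) :
    ∃ h : ↥Xs → Fin K → ℝ, IsRule Xs h ∧ ∀ x y, g x y ≤ h x y := by
  set slack : ↥Xs → ℝ := fun x => (1 - ∑ y, g x y) / K
  have hslack : ∀ x, 0 ≤ slack x := fun x =>
    div_nonneg (sub_nonneg.mpr (hg_sum x)) (Nat.cast_nonneg K)
  refine ⟨fun x y => g x y + slack x, ⟨fun x y => ?_, fun x => ?_, fun y => ?_⟩,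
    fun x y => le_add_of_nonneg_right (hslack x)⟩
  · exact add_nonneg (hg_nonneg x y) (hslack x)
  · have hK' : (K : ℝ) ≠ 0 := by positivity
    simp only [slack, Finset.sum_add_distrib, Finset.sum_const, Finset.card_univ,
      Fintype.card_fin, nsmul_eq_mul]
    field_simp
    ring
  · exact (hg_meas y).add
      ((measurable_const.sub (Finset.measurable_sum _ fun y _ => hg_meas y)).div_const _)

theorem stmt_3_general {d K m : ℕ} (hK : 0 < K)
    (Xs : Set (Fin d → ℝ))
    (Φ : ↥Xs × Fin K → Fin m → ℝ) (hΦmeas : ∀ i, Measurable fun z => Φ z i)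
    (B : ℝ) (hΦbdd : ∀ z i, |Φ z i| ≤ B) :
    (∀ (μ : Fin m → ℝ) (x : ↥Xs),
      ∑ y : Fin K, max ((∑ i, Φ (x, y) i * μ i) - phi Φ μ) 0 ≤ 1) ∧
    (∀ μ : Fin m → ℝ, ∃ h : ↥Xs → Fin K → ℝ, IsRule Xs h ∧
      ∀ (x : ↥Xs) (y : Fin K), (∑ i, Φ (x, y) i * μ i) - phi Φ μ ≤ h x y) := by
  have hsum_le : ∀ (μ : Fin m → ℝ) (x : ↥Xs),
      ∑ y : Fin K, max ((∑ i, Φ (x, y) i * μ i) - phi Φ μ) 0 ≤ 1 := fun μ x =>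
    sum_max_sub_zero_le_one_of_forall_finset _ _ (sum_sub_one_le_card_mul_phi hΦbdd μ x)
  refine ⟨hsum_le, fun μ => ?_⟩
  have hmeas : ∀ y, Measurable fun x : ↥Xs => max ((∑ i, Φ (x, y) i * μ i) - phi Φ μ) 0 :=
    fun y => by fun_prop
  obtain ⟨h, hrule, hge⟩ := exists_isRule_ge hK Xs _ (fun _ _ => le_max_right _ _)
    (hsum_le μ) hmeas
  exact ⟨h, hrule, fun x y => (le_max_left _ _).trans (hge x y)⟩

/-- The positive parts of `Φ(x,y)ᵀμ − φ(μ)` sum to at most one over the labels; hence a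
classification rule dominating `Φᵀμ − φ(μ)` always exists. -/
theorem stmt_3 {d K m : ℕ} (hK : 0 < K)
    (Xs : Set (Fin d → ℝ)) (hXs : MeasurableSet Xs)
    (Φ : ↥Xs × Fin K → Fin m → ℝ) (hΦmeas : ∀ i, Measurable fun z => Φ z i)
    (B : ℝ) (hΦbdd : ∀ z i, |Φ z i| ≤ B) :
    (∀ (μ : Fin m → ℝ) (x : ↥Xs),
      ∑ y : Fin K, max ((∑ i, Φ (x, y) i * μ i) - phi Φ μ) 0 ≤ 1) ∧
    (∀ μ : Fin m → ℝ, ∃ h : ↥Xs → Fin K → ℝ, IsRule Xs h ∧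
      ∀ (x : ↥Xs) (y : Fin K), (∑ i, Φ (x, y) i * μ i) - phi Φ μ ≤ h x y) :=
  stmt_3_general hK Xs Φ hΦmeas B hΦbdd

end
end

section
/- (Theorem 2) Let x_1,…,x_n ∈ X be fixed instances, p^n_x the uniform distribution over {x_1,…,x_n}, and V = {p Borel probability distribution on X×Y : |E_p{Φ} − τ| ⪯ λ and the instances' marginal of p equals p^n_x}. Assume V is nonempty. If μ* is a minimizer of min_{μ ∈ ℝ^m} 1 − τᵀμ + (1/n)∑_{i=1}^n φ(μ,x_i) + λᵀ|μ|, and h^V is the classification rule h^V(y|x) = max(Φ(x,y)ᵀμ* − φ(μ*,x), 0) for all x ∈ X and y ∈ Y, then h^V is a 0-1 minimax risk classifier for V, i.e., sup_{p ∈ V} ℓ(h^V,p) = inf_{h ∈ T(X,Y)} sup_{p ∈ V} ℓ(h,p). -/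
/-!
The dual objective `g μ = 1 - τᵀμ + (1/n) ∑ⱼ φ(μ, xⱼ) + λᵀ|μ|` is the maximum of finitely many
affine functions of `μ`: `φ(μ, x)` is a maximum over nonempty label sets `C`, and `λᵢ|μᵢ|` a
maximum over signs. The piece indexed by sets `Cⱼ` and signs has constant term
`1 - (1/n) ∑ⱼ 1/|Cⱼ|`, and its gradient is computed from the distribution that is uniform on `Cⱼ`
above `xⱼ`. At a minimiser `μ*`, `0` is a convex combination of the gradients of the active pieces
(otherwise a separating direction would decrease `g`). Mixing the uniform distributions with these
weights gives a `P ∈ V` under which every rule has expected loss at least `g μ*`.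

Conversely `h^V ≥ Φᵀμ* - φ(μ*, ·)`, and the constraints defining `V` bound the loss of `h^V` under
every `p ∈ V` by `g μ*`. Water-filling, `∑_y (a_y - φ)₊ = 1` when `φ` is the maximum of
`(∑_{y ∈ C} a_y - 1)/|C|`, makes `h^V` a rule. So `(h^V, P)` is a saddle point of value `g μ*`.
-/

open MeasureTheory
open scoped ENNReal

noncomputable section

/-- `φ(μ,x) = max_{∅ ≠ C ⊆ Y} ((∑_{y∈C} Φ(x,y)ᵀμ) - 1)/|C|`. -/
def phix {d K m : ℕ} {Xs : Set (Fin d → ℝ)} (Φ : ↥Xs × Fin K → Fin m → ℝ)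
    (μ : Fin m → ℝ) (x : ↥Xs) : ℝ :=
  ⨆ C : {C : Finset (Fin K) // C.Nonempty},
    ((∑ y ∈ C.1, ∑ i, Φ (x, y) i * μ i) - 1) / (C.1.card : ℝ)

/-- Uncertainty set with fixed instances' marginal equal to the uniform (empirical)
distribution over the instances `xi 0, …, xi (n-1)`. -/
def UncV {d K m n : ℕ} {Xs : Set (Fin d → ℝ)} (Φ : ↥Xs × Fin K → Fin m → ℝ)
    (τ lam : Fin m → ℝ) (xi : Fin n → ↥Xs) : Set (Measure (↥Xs × Fin K)) :=
  {p | IsProbabilityMeasure p ∧ (∀ i, |(∫ z, Φ z i ∂p) - τ i| ≤ lam i) ∧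
    p.map Prod.fst = (n : ℝ≥0∞)⁻¹ • ∑ j : Fin n, Measure.dirac (xi j)}

open Finset Matrix Filter Topology

section WaterLevel

variable {ι : Type*} [Fintype ι]

def waterLevel (a : ι → ℝ) : ℝ :=
  ⨆ C : {C : Finset ι // C.Nonempty}, ((∑ y ∈ C.1, a y) - 1) / (#C.1 : ℝ)

lemma div_le_waterLevel (a : ι → ℝ) {C : Finset ι} (hC : C.Nonempty) :
    ((∑ y ∈ C, a y) - 1) / #C ≤ waterLevel a :=
  le_ciSup (f := fun C : {C : Finset ι // C.Nonempty} => ((∑ y ∈ C.1, a y) - 1) / (#C.1 : ℝ))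
    (Set.finite_range _).bddAbove ⟨C, hC⟩

lemma exists_waterLevel_eq [Nonempty ι] (a : ι → ℝ) :
    ∃ C : Finset ι, C.Nonempty ∧ waterLevel a = ((∑ y ∈ C, a y) - 1) / #C := by
  have : Nonempty {C : Finset ι // C.Nonempty} := ⟨⟨univ, univ_nonempty⟩⟩
  obtain ⟨C, hC⟩ := exists_eq_ciSup_of_finite
    (f := fun C : {C : Finset ι // C.Nonempty} => ((∑ y ∈ C.1, a y) - 1) / (#C.1 : ℝ))
  exact ⟨C.1, C.2, hC.symm⟩

lemma sum_sub_waterLevel_le_one (a : ι → ℝ) {C : Finset ι} (hC : C.Nonempty) :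
    ∑ y ∈ C, (a y - waterLevel a) ≤ 1 := by
  have hle := (div_le_iff₀ (by exact_mod_cast hC.card_pos)).1 (div_le_waterLevel a hC)
  rw [sum_sub_distrib, sum_const, nsmul_eq_mul]
  linarith

lemma exists_sum_sub_waterLevel_eq_one [Nonempty ι] (a : ι → ℝ) :
    ∃ C : Finset ι, ∑ y ∈ C, (a y - waterLevel a) = 1 := by
  obtain ⟨C, hC, hwl⟩ := exists_waterLevel_eq a
  have hpos : (#C : ℝ) ≠ 0 := by exact_mod_cast hC.card_pos.ne'
  refine ⟨C, ?_⟩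
  rw [sum_sub_distrib, sum_const, nsmul_eq_mul, hwl]
  field_simp
  ring

lemma sum_max_sub_waterLevel [Nonempty ι] (a : ι → ℝ) :
    ∑ y, max (a y - waterLevel a) 0 = 1 := by
  classical
  apply le_antisymm
  · set P := univ.filter fun y => waterLevel a < a y
    have hP : ∑ y, max (a y - waterLevel a) 0 = ∑ y ∈ P, (a y - waterLevel a) := by
      rw [sum_filter]
      refine sum_congr rfl fun y _ => ?_
      split_ifs with h
      · exact max_eq_left (by linarith)
      · exact max_eq_right (by linarith)
    rcases P.eq_empty_or_nonempty with hPe | hPne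
    · simp [hP, hPe]
    · exact hP ▸ sum_sub_waterLevel_le_one a hPne
  · obtain ⟨C, hC⟩ := exists_sum_sub_waterLevel_eq_one a
    calc 1 = ∑ y ∈ C, (a y - waterLevel a) := hC.symm
      _ ≤ ∑ y ∈ C, max (a y - waterLevel a) 0 := sum_le_sum fun y _ => le_max_left _ _
      _ ≤ ∑ y, max (a y - waterLevel a) 0 :=
        sum_le_sum_of_subset_of_nonneg (subset_univ _) fun _ _ _ => le_max_right _ _

end WaterLevel

section MaxAffine

variable {ι S : Type*} [Fintype ι] [Fintype S]

theorem zero_mem_convexHull_of_isMin_max_affine (c : S → ℝ) (b : S → ι → ℝ)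
    (g : (ι → ℝ) → ℝ) (hle : ∀ s μ, c s + b s ⬝ᵥ μ ≤ g μ)
    (hatt : ∀ μ, ∃ s, c s + b s ⬝ᵥ μ = g μ) {μ₀ : ι → ℝ} (hmin : ∀ μ, g μ₀ ≤ g μ) :
    (0 : ι → ℝ) ∈ convexHull ℝ (b '' {s | c s + b s ⬝ᵥ μ₀ = g μ₀}) := by
  classical
  by_contra h0
  obtain ⟨f, u, hfu, hu⟩ := geometric_hahn_banach_closed_point (convex_convexHull ℝ _)
    (((Set.toFinite _).image b).isCompact_convexHull (𝕜 := ℝ)).isClosed h0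
  set v : ι → ℝ := fun i => f fun j => if i = j then 1 else 0
  have hf : ∀ x, f x = x ⬝ᵥ v := f.toLinearMap.pi_apply_eq_sum_univ
  -- moving from `μ₀` along `v` lowers every active piece, and the inactive ones stay below
  -- `g μ₀` for small steps
  have hdesc : ∀ s, ∀ᶠ t in 𝓝[>] (0 : ℝ), c s + b s ⬝ᵥ (μ₀ + t • v) < g μ₀ := by
    intro s
    simp only [dotProduct_add, dotProduct_smul, smul_eq_mul]
    by_cases hs : c s + b s ⬝ᵥ μ₀ = g μ₀
    · have hneg : b s ⬝ᵥ v < 0 := by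
        rw [← hf]
        exact (hfu _ (subset_convexHull ℝ _ ⟨s, hs, rfl⟩)).trans (by simpa using hu)
      filter_upwards [self_mem_nhdsWithin] with t (ht : 0 < t)
      nlinarith
    · have hlt : c s + b s ⬝ᵥ μ₀ < g μ₀ := (hle s μ₀).lt_of_ne hs
      have hcont : Continuous fun t : ℝ => c s + (b s ⬝ᵥ μ₀ + t * (b s ⬝ᵥ v)) := by fun_prop
      exact nhdsWithin_le_nhds ((hcont.tendsto' 0 _ (by simp)).eventually_lt_const hlt)
  obtain ⟨t, ht⟩ := (eventually_all.2 hdesc).exists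
  obtain ⟨s, hs⟩ := hatt (μ₀ + t • v)
  exact (hmin _).not_gt (hs ▸ ht s)

theorem exists_convexCombination_of_isMin_max_affine (c : S → ℝ) (b : S → ι → ℝ)
    (g : (ι → ℝ) → ℝ) (hle : ∀ s μ, c s + b s ⬝ᵥ μ ≤ g μ)
    (hatt : ∀ μ, ∃ s, c s + b s ⬝ᵥ μ = g μ) {μ₀ : ι → ℝ} (hmin : ∀ μ, g μ₀ ≤ g μ) :
    ∃ (κ : Type) (_ : Fintype κ) (w : κ → ℝ) (σ : κ → S), (∀ k, 0 ≤ w k) ∧ ∑ k, w k = 1 ∧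
      ∑ k, w k • b (σ k) = 0 ∧ ∑ k, w k * c (σ k) = g μ₀ := by
  obtain ⟨κ, _, w, z, hw0, hw1, hz, hwz⟩ := mem_convexHull_iff_exists_fintype.1
    (zero_mem_convexHull_of_isMin_max_affine c b g hle hatt hmin)
  choose σ hσ hbσ using hz
  have hb : ∑ k, w k • b (σ k) = 0 := by simpa only [hbσ] using hwz
  refine ⟨κ, inferInstance, w, σ, hw0, hw1, hb, ?_⟩
  calc ∑ k, w k * c (σ k) = ∑ k, w k * (g μ₀ - b (σ k) ⬝ᵥ μ₀) :=
        sum_congr rfl fun k _ => by rw [← (hσ k : c (σ k) + b (σ k) ⬝ᵥ μ₀ = g μ₀)]; ring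
    _ = g μ₀ - (∑ k, w k • b (σ k)) ⬝ᵥ μ₀ := by
        simp only [sum_dotProduct, smul_dotProduct, smul_eq_mul, mul_sub, sum_sub_distrib,
          ← sum_mul, hw1, one_mul]
    _ = g μ₀ := by rw [hb, zero_dotProduct, sub_zero]

end MaxAffine

section Uniform

variable {ι : Type*} [DecidableEq ι]

def unifOn (C : Finset ι) (y : ι) : ℝ := if y ∈ C then (#C : ℝ)⁻¹ else 0

lemma unifOn_nonneg (C : Finset ι) (y : ι) : 0 ≤ unifOn C y := by
  unfold unifOn; split_ifs <;> positivity

lemma sum_unifOn_mul [Fintype ι] (C : Finset ι) (a : ι → ℝ) :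
    ∑ y, unifOn C y * a y = (∑ y ∈ C, a y) / #C := by
  simp [unifOn, ite_mul, sum_ite_mem, div_eq_inv_mul, mul_sum]

lemma sum_unifOn [Fintype ι] {C : Finset ι} (hC : C.Nonempty) : ∑ y, unifOn C y = 1 := by
  have h := sum_unifOn_mul C fun _ => 1
  simp only [mul_one, sum_const, nsmul_eq_mul] at h
  rw [h, div_self (by exact_mod_cast hC.card_pos.ne')]

end Uniform

lemma SignType.abs_coe_le_one (σ : SignType) : |(σ : ℝ)| ≤ 1 := by
  cases σ <;> simp

lemma SignType.coe_mul_le_abs (σ : SignType) (x : ℝ) : σ * x ≤ |x| :=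
  calc (σ : ℝ) * x ≤ |σ * x| := le_abs_self _
    _ ≤ |x| := by rw [abs_mul]; exact mul_le_of_le_one_left (abs_nonneg _) σ.abs_coe_le_one

section JointMean

variable {X : Type*} {n K m : ℕ}

def jointMean (xi : Fin n → X) (r : Fin n → Fin K → ℝ) (f : X × Fin K → ℝ) : ℝ :=
  (∑ j, ∑ y, r j y * f (xi j, y)) / n

lemma jointMean_sum_mul {κ : Type*} [Fintype κ] (xi : Fin n → X) (w : κ → ℝ)
    (r : κ → Fin n → Fin K → ℝ) (f : X × Fin K → ℝ) :
    jointMean xi (fun j y => ∑ k, w k * r k j y) f = ∑ k, w k * jointMean xi (r k) f := by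
  simp only [jointMean, mul_div_assoc', ← sum_div, mul_sum, sum_mul, mul_assoc]
  exact congrArg (· / _) ((sum_congr rfl fun _ _ => sum_comm).trans sum_comm)

lemma dotProduct_jointMean (xi : Fin n → X) (r : Fin n → Fin K → ℝ)
    (Φ : X × Fin K → Fin m → ℝ) (μ : Fin m → ℝ) :
    (fun i => jointMean xi r fun z => Φ z i) ⬝ᵥ μ = jointMean xi r fun z => Φ z ⬝ᵥ μ := by
  simp only [jointMean, dotProduct, div_mul_eq_mul_div, ← sum_div, sum_mul, mul_sum, mul_assoc]
  exact congrArg (· / _) (sum_comm.trans (sum_congr rfl fun _ _ => sum_comm))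

end JointMean

section Dual

variable {d K m n : ℕ} {Xs : Set (Fin d → ℝ)}

lemma phix_eq_waterLevel (Φ : ↥Xs × Fin K → Fin m → ℝ) (μ : Fin m → ℝ) (x : ↥Xs) :
    phix Φ μ x = waterLevel fun y => Φ (x, y) ⬝ᵥ μ := rfl

variable (Φ : ↥Xs × Fin K → Fin m → ℝ) (τ lam : Fin m → ℝ) (xi : Fin n → ↥Xs)

def dualObjective (μ : Fin m → ℝ) : ℝ :=
  1 - τ ⬝ᵥ μ + (∑ j, phix Φ μ (xi j)) / n + ∑ i, lam i * |μ i|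

/-- The dual objective is the maximum of affine functions indexed by a nonempty label set for
each instance and a sign for each feature. -/
abbrev DualPiece (n K m : ℕ) : Type :=
  (Fin n → {C : Finset (Fin K) // C.Nonempty}) × (Fin m → SignType)

namespace DualPiece

def cond (s : DualPiece n K m) (j : Fin n) : Fin K → ℝ := unifOn (s.1 j).1

def const (s : DualPiece n K m) : ℝ := 1 - (∑ j, (#(s.1 j).1 : ℝ)⁻¹) / n

def grad (s : DualPiece n K m) (i : Fin m) : ℝ :=
  jointMean xi s.cond (fun z => Φ z i) - τ i + lam i * s.2 i

lemma jointMean_cond (s : DualPiece n K m) (f : ↥Xs × Fin K → ℝ) :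
    jointMean xi s.cond f = (∑ j, (∑ y ∈ (s.1 j).1, f (xi j, y)) / #(s.1 j).1) / n := by
  simp only [jointMean, cond, sum_unifOn_mul]

lemma const_add_grad_dotProduct (s : DualPiece n K m) (μ : Fin m → ℝ) :
    s.const + s.grad Φ τ lam xi ⬝ᵥ μ = 1 - τ ⬝ᵥ μ
      + (∑ j, ((∑ y ∈ (s.1 j).1, Φ (xi j, y) ⬝ᵥ μ) - 1) / #(s.1 j).1) / n
      + ∑ i, lam i * (s.2 i * μ i) := by
  have hgrad : s.grad Φ τ lam xi = (fun i => jointMean xi s.cond fun z => Φ z i) - τ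
      + fun i => lam i * s.2 i := rfl
  rw [hgrad, add_dotProduct, sub_dotProduct, dotProduct_jointMean, jointMean_cond]
  simp only [const, sub_div, sum_sub_distrib, one_div, dotProduct, mul_assoc]
  ring

lemma const_add_grad_le (hlam : ∀ i, 0 ≤ lam i) (s : DualPiece n K m) (μ : Fin m → ℝ) :
    s.const + s.grad Φ τ lam xi ⬝ᵥ μ ≤ dualObjective Φ τ lam xi μ := by
  rw [const_add_grad_dotProduct, dualObjective]
  gcongr with j _ i _
  · exact div_le_waterLevel _ (s.1 j).2
  · exact hlam i
  · exact (s.2 i).coe_mul_le_abs (μ i)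

lemma exists_const_add_grad_eq (hK : 0 < K) (μ : Fin m → ℝ) :
    ∃ s : DualPiece n K m, s.const + s.grad Φ τ lam xi ⬝ᵥ μ = dualObjective Φ τ lam xi μ := by
  have : Nonempty (Fin K) := ⟨⟨0, hK⟩⟩
  choose C hC hCeq using fun j => exists_waterLevel_eq fun y => Φ (xi j, y) ⬝ᵥ μ
  refine ⟨(fun j => ⟨C j, hC j⟩, fun i => SignType.sign (μ i)), ?_⟩
  simp only [const_add_grad_dotProduct, dualObjective, phix_eq_waterLevel, hCeq, sign_mul_self]

lemma jointMean_cond_le_one_sub_const (s : DualPiece n K m) {h : ↥Xs → Fin K → ℝ}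
    (hh : IsRule Xs h) : jointMean xi s.cond (fun z => h z.1 z.2) ≤ 1 - s.const := by
  rw [jointMean_cond, const, sub_sub_cancel]
  gcongr with j
  rw [div_eq_mul_inv]
  refine mul_le_of_le_one_left (by positivity) ?_
  calc ∑ y ∈ (s.1 j).1, h (xi j) y ≤ ∑ y, h (xi j) y :=
        sum_le_sum_of_subset_of_nonneg (subset_univ _) fun y _ _ => hh.1 _ y
    _ = 1 := hh.2.1 _

end DualPiece

theorem exists_cond_of_isMin_dualObjective (hK : 0 < K) (hlam : ∀ i, 0 ≤ lam i)
    {μ₀ : Fin m → ℝ} (hmin : ∀ μ, dualObjective Φ τ lam xi μ₀ ≤ dualObjective Φ τ lam xi μ) :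
    ∃ r : Fin n → Fin K → ℝ, (∀ j y, 0 ≤ r j y) ∧ (∀ j, ∑ y, r j y = 1) ∧
      (∀ i, |jointMean xi r (fun z => Φ z i) - τ i| ≤ lam i) ∧
      ∀ h, IsRule Xs h →
        jointMean xi r (fun z => h z.1 z.2) ≤ 1 - dualObjective Φ τ lam xi μ₀ := by
  obtain ⟨κ, _, w, σ, hw0, hw1, hgrad, hconst⟩ :=
    exists_convexCombination_of_isMin_max_affine (fun s : DualPiece n K m => s.const)
      (fun s => s.grad Φ τ lam xi) _ (DualPiece.const_add_grad_le Φ τ lam xi hlam)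
      (DualPiece.exists_const_add_grad_eq Φ τ lam xi hK) hmin
  refine ⟨fun j y => ∑ k, w k * (σ k).cond j y, fun j y => ?_, fun j => ?_, fun i => ?_,
    fun h hh => ?_⟩
  · exact sum_nonneg fun k _ => mul_nonneg (hw0 k) (unifOn_nonneg _ _)
  · rw [sum_comm]
    simp only [← mul_sum, DualPiece.cond, sum_unifOn ((σ _).1 j).2, mul_one, hw1]
  · have hgrad_i : ∑ k, w k * (σ k).grad Φ τ lam xi i = 0 := by
      simpa using congrFun hgrad i
    have hmean : jointMean xi (fun j y => ∑ k, w k * (σ k).cond j y) (fun z => Φ z i) - τ i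
        = -(lam i * ∑ k, w k * (σ k).2 i) := by
      simp only [DualPiece.grad] at hgrad_i
      rw [jointMean_sum_mul]
      simp only [mul_add, mul_sub, sum_add_distrib, sum_sub_distrib, ← sum_mul, hw1,
        mul_left_comm (w _) (lam i), ← mul_sum] at hgrad_i
      linear_combination hgrad_i
    rw [hmean, abs_neg, abs_mul, abs_of_nonneg (hlam i)]
    refine mul_le_of_le_one_right (hlam i) ((abs_sum_le_sum_abs _ _).trans ?_)
    calc ∑ k, |w k * (σ k).2 i| ≤ ∑ k, w k := sum_le_sum fun k _ => by
          rw [abs_mul, abs_of_nonneg (hw0 k)]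
          exact mul_le_of_le_one_right (hw0 k) ((σ k).2 i).abs_coe_le_one
      _ = 1 := hw1
  · rw [jointMean_sum_mul, ← hconst]
    calc ∑ k, w k * jointMean xi (σ k).cond (fun z => h z.1 z.2)
        ≤ ∑ k, w k * (1 - (σ k).const) :=
          sum_le_sum fun k _ => mul_le_mul_of_nonneg_left
            ((σ k).jointMean_cond_le_one_sub_const xi hh) (hw0 k)
      _ = 1 - ∑ k, w k * (σ k).const := by simp only [mul_sub, sum_sub_distrib, mul_one, hw1]

end Dual

section Empirical

variable {X : Type*} [MeasurableSpace X] {n K : ℕ}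

def empiricalJoint (xi : Fin n → X) (r : Fin n → Fin K → ℝ) : Measure (X × Fin K) :=
  (n : ℝ≥0∞)⁻¹ • ∑ j, ∑ y, ENNReal.ofReal (r j y) • Measure.dirac (xi j, y)

lemma integral_empiricalJoint [MeasurableSingletonClass X] (xi : Fin n → X)
    {r : Fin n → Fin K → ℝ} (hr : ∀ j y, 0 ≤ r j y) (f : X × Fin K → ℝ) :
    ∫ z, f z ∂empiricalJoint xi r = jointMean xi r f := by
  have hint : ∀ z : X × Fin K, ∀ c : ℝ, Integrable f (ENNReal.ofReal c • Measure.dirac z) :=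
    fun z c => (integrable_dirac enorm_lt_top).smul_measure ENNReal.ofReal_ne_top
  rw [empiricalJoint, integral_smul_measure, integral_finsetSum_measure fun j _ =>
    integrable_finsetSum_measure.2 fun y _ => hint _ _]
  simp only [integral_finsetSum_measure fun y _ => hint _ _, integral_smul_measure,
    integral_dirac, ENNReal.toReal_ofReal (hr _ _), ENNReal.toReal_inv, ENNReal.toReal_natCast,
    smul_eq_mul, jointMean, div_eq_inv_mul]

lemma map_fst_empiricalJoint (xi : Fin n → X) {r : Fin n → Fin K → ℝ} (hr0 : ∀ j y, 0 ≤ r j y)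
    (hr1 : ∀ j, ∑ y, r j y = 1) :
    (empiricalJoint xi r).map Prod.fst = (n : ℝ≥0∞)⁻¹ • ∑ j, Measure.dirac (xi j) := by
  simp only [empiricalJoint, Measure.map_smul,
    Measure.map_finset_sum' measurable_fst.aemeasurable, Measure.map_dirac' measurable_fst,
    ← sum_smul, ← ENNReal.ofReal_sum_of_nonneg fun y _ => hr0 _ y, hr1, ENNReal.ofReal_one,
    one_smul]

lemma isProbabilityMeasure_empiricalJoint (hn : 0 < n) (xi : Fin n → X)
    {r : Fin n → Fin K → ℝ} (hr0 : ∀ j y, 0 ≤ r j y) (hr1 : ∀ j, ∑ y, r j y = 1) :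
    IsProbabilityMeasure (empiricalJoint xi r) := by
  constructor
  rw [← Set.preimage_univ (f := Prod.fst), ← Measure.map_apply measurable_fst MeasurableSet.univ,
    map_fst_empiricalJoint xi hr0 hr1]
  simp [ENNReal.inv_mul_cancel (by exact_mod_cast hn.ne') (ENNReal.natCast_ne_top n)]

variable [MeasurableSingletonClass X] {p : Measure (X × Fin K)} {xi : Fin n → X}

lemma integrable_of_map_fst_eq (hn : 0 < n)
    (hp : p.map Prod.fst = (n : ℝ≥0∞)⁻¹ • ∑ j, Measure.dirac (xi j)) {f : X × Fin K → ℝ}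
    (hf : Measurable f) : Integrable f p := by
  set F : X → ℝ := fun x => ∑ y, |f (x, y)|
  have hF : Measurable F :=
    Finset.measurable_sum _ fun y _ => (hf.comp measurable_prodMk_right).abs
  have hFint : Integrable F (p.map Prod.fst) := by
    rw [hp]
    exact (integrable_finsetSum_measure.2 fun j _ => integrable_dirac enorm_lt_top).smul_measure
      (ENNReal.inv_ne_top.2 (by exact_mod_cast hn.ne'))
  refine ((integrable_map_measure hF.aestronglyMeasurable measurable_fst.aemeasurable).1
    hFint).mono' hf.aestronglyMeasurable (ae_of_all _ fun z => ?_)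
  exact single_le_sum (f := fun y => |f (z.1, y)|) (fun y _ => abs_nonneg _) (mem_univ z.2)

lemma integral_comp_fst_of_map_fst_eq
    (hp : p.map Prod.fst = (n : ℝ≥0∞)⁻¹ • ∑ j, Measure.dirac (xi j)) {f : X → ℝ}
    (hf : Measurable f) : ∫ z, f z.1 ∂p = (∑ j, f (xi j)) / n := by
  rw [← integral_map measurable_fst.aemeasurable hf.aestronglyMeasurable, hp,
    integral_smul_measure, integral_finsetSum_measure fun j _ => integrable_dirac enorm_lt_top]
  simp only [integral_dirac, ENNReal.toReal_inv, ENNReal.toReal_natCast, smul_eq_mul,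
    div_eq_inv_mul]

end Empirical

theorem sSup_image_eq_sInf_of_saddle {R P : Type*} (L : R → P → ℝ) (adm : R → Prop)
    (V : Set P) {h₀ : R} {p₀ : P} {v : ℝ} (hh₀ : adm h₀) (hp₀ : p₀ ∈ V)
    (hup : ∀ p ∈ V, L h₀ p ≤ v) (hlow : ∀ h, adm h → v ≤ L h p₀)
    (hbdd : ∀ h, adm h → BddAbove (L h '' V)) :
    sSup (L h₀ '' V) = sInf {r | ∃ h, adm h ∧ r = sSup (L h '' V)} := by
  have hgreatest : IsGreatest (L h₀ '' V) v := by
    refine ⟨⟨p₀, hp₀, (hup p₀ hp₀).antisymm (hlow h₀ hh₀)⟩, ?_⟩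
    rintro _ ⟨p, hp, rfl⟩
    exact hup p hp
  have hsup := hgreatest.csSup_eq
  have hleast : IsLeast {r | ∃ h, adm h ∧ r = sSup (L h '' V)} v := by
    refine ⟨⟨h₀, hh₀, hsup.symm⟩, ?_⟩
    rintro _ ⟨h, hh, rfl⟩
    exact (hlow h hh).trans (le_csSup (hbdd h hh) ⟨p₀, hp₀, rfl⟩)
  rw [hsup, hleast.csInf_eq]

section Risk

variable {d K m n : ℕ} {Xs : Set (Fin d → ℝ)} {Φ : ↥Xs × Fin K → Fin m → ℝ}

lemma measurable_phix (hΦ : ∀ i, Measurable fun z => Φ z i) (μ : Fin m → ℝ) :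
    Measurable (phix Φ μ) :=
  Measurable.iSup fun _ => ((Finset.measurable_sum _ fun _ _ => Finset.measurable_sum _
    fun i _ => ((hΦ i).comp measurable_prodMk_right).mul_const _).sub_const _).div_const _

lemma isRule_max_sub_phix (hK : 0 < K) (hΦ : ∀ i, Measurable fun z => Φ z i)
    (μ : Fin m → ℝ) : IsRule Xs fun x y => max (Φ (x, y) ⬝ᵥ μ - phix Φ μ x) 0 := by
  have : Nonempty (Fin K) := ⟨⟨0, hK⟩⟩
  refine ⟨fun x y => le_max_right _ _, fun x => sum_max_sub_waterLevel _, fun y => ?_⟩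
  exact ((Finset.measurable_sum _ fun i _ =>
    ((hΦ i).comp measurable_prodMk_right).mul_const _).sub (measurable_phix hΦ μ)).max
    measurable_const

lemma IsRule.le_one_s4 {h : ↥Xs → Fin K → ℝ} (hh : IsRule Xs h) (x : ↥Xs) (y : Fin K) :
    h x y ≤ 1 :=
  hh.2.1 x ▸ single_le_sum (fun y _ => hh.1 x y) (mem_univ y)

lemma IsRule.measurable_uncurry {h : ↥Xs → Fin K → ℝ} (hh : IsRule Xs h) :
    Measurable fun z : ↥Xs × Fin K => h z.1 z.2 :=
  measurable_from_prod_countable_left hh.2.2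

lemma loss_le_one {h : ↥Xs → Fin K → ℝ} (hh : IsRule Xs h) (p : Measure (↥Xs × Fin K))
    [IsProbabilityMeasure p] : loss h p ≤ 1 := by
  calc loss h p ≤ ∫ _, (1 : ℝ) ∂p :=
        integral_mono_of_nonneg (ae_of_all _ fun z => sub_nonneg.2 (hh.le_one_s4 _ _))
          (integrable_const 1) (ae_of_all _ fun z => sub_le_self _ (hh.1 _ _))
    _ = 1 := by simp

lemma loss_empiricalJoint (hn : 0 < n) (xi : Fin n → ↥Xs) {r : Fin n → Fin K → ℝ}
    (hr0 : ∀ j y, 0 ≤ r j y) (hr1 : ∀ j, ∑ y, r j y = 1) (h : ↥Xs → Fin K → ℝ) :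
    loss h (empiricalJoint xi r) = 1 - jointMean xi r fun z => h z.1 z.2 := by
  have hn' : (n : ℝ) ≠ 0 := by exact_mod_cast hn.ne'
  rw [loss, integral_empiricalJoint xi hr0]
  simp only [jointMean, mul_sub, mul_one, sum_sub_distrib, hr1, sum_const, card_univ,
    Fintype.card_fin, nsmul_eq_mul, sub_div, div_self hn']

variable (Φ) (τ lam : Fin m → ℝ) (xi : Fin n → ↥Xs)

lemma loss_le_dualObjective (hn : 0 < n) (hΦ : ∀ i, Measurable fun z => Φ z i)
    (μ : Fin m → ℝ) {h : ↥Xs → Fin K → ℝ} (hh : IsRule Xs h)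
    (hle : ∀ x y, Φ (x, y) ⬝ᵥ μ - phix Φ μ x ≤ h x y) {p : Measure (↥Xs × Fin K)}
    (hp : p ∈ UncV Φ τ lam xi) : loss h p ≤ dualObjective Φ τ lam xi μ := by
  obtain ⟨hprob, hmom, hmarg⟩ := hp
  have hint {f : ↥Xs × Fin K → ℝ} (hf : Measurable f) : Integrable f p :=
    integrable_of_map_fst_eq hn hmarg hf
  have hΦμ : Measurable fun z => Φ z ⬝ᵥ μ :=
    Finset.measurable_sum _ fun i _ => (hΦ i).mul_const _
  have hφ : Measurable fun z : ↥Xs × Fin K => phix Φ μ z.1 :=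
    (measurable_phix hΦ μ).comp measurable_fst
  have hloss : loss h p = 1 - ∫ z, h z.1 z.2 ∂p := by
    rw [loss, integral_sub (integrable_const 1) (hint hh.measurable_uncurry), integral_const,
      probReal_univ, one_smul]
  have hmean : ∑ i, (∫ z, Φ z i ∂p) * μ i - (∑ j, phix Φ μ (xi j)) / n
      ≤ ∫ z, h z.1 z.2 ∂p := by
    calc _ = ∫ z, (Φ z ⬝ᵥ μ - phix Φ μ z.1) ∂p := by
          rw [integral_sub (hint hΦμ) (hint hφ),
            integral_comp_fst_of_map_fst_eq hmarg (measurable_phix hΦ μ)]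
          simp only [dotProduct]
          rw [integral_finsetSum _ fun i _ => hint ((hΦ i).mul_const _)]
          simp only [integral_mul_const]
      _ ≤ _ := integral_mono ((hint hΦμ).sub (hint hφ))
          (hint hh.measurable_uncurry) fun z => hle z.1 z.2
  have hfeas : τ ⬝ᵥ μ - ∑ i, (∫ z, Φ z i ∂p) * μ i ≤ ∑ i, lam i * |μ i| := by
    rw [dotProduct, ← sum_sub_distrib]
    refine sum_le_sum fun i _ => ?_
    calc τ i * μ i - (∫ z, Φ z i ∂p) * μ i ≤ |τ i - ∫ z, Φ z i ∂p| * |μ i| := by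
          rw [← sub_mul, ← abs_mul]; exact le_abs_self _
      _ ≤ lam i * |μ i| := by
          gcongr
          rw [abs_sub_comm]; exact hmom i
  rw [hloss, dualObjective]
  linarith

end Risk

theorem stmt_4_general {d K m n : ℕ} (hK : 0 < K) (hn : 0 < n)
    (Xs : Set (Fin d → ℝ))
    (Φ : ↥Xs × Fin K → Fin m → ℝ) (hΦmeas : ∀ i, Measurable fun z => Φ z i)
    (τ lam : Fin m → ℝ)
    (xi : Fin n → ↥Xs)
    (hVne : (UncV Φ τ lam xi).Nonempty)
    (μs : Fin m → ℝ)
    (hμs : ∀ μ : Fin m → ℝ,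
      1 - (∑ i, τ i * μs i) + (∑ j, phix Φ μs (xi j)) / n + ∑ i, lam i * |μs i| ≤
      1 - (∑ i, τ i * μ i) + (∑ j, phix Φ μ (xi j)) / n + ∑ i, lam i * |μ i|)
    (hV : ↥Xs → Fin K → ℝ)
    (hhV : ∀ (x : ↥Xs) (y : Fin K),
      hV x y = max ((∑ i, Φ (x, y) i * μs i) - phix Φ μs x) 0) :
    IsRule Xs hV ∧
    sSup ((fun p => loss hV p) '' UncV Φ τ lam xi)
      = sInf {r : ℝ | ∃ h : ↥Xs → Fin K → ℝ, IsRule Xs h ∧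
          r = sSup ((fun p => loss h p) '' UncV Φ τ lam xi)} := by
  obtain ⟨p₀, hp₀⟩ := hVne
  have hlam : ∀ i, 0 ≤ lam i := fun i => (abs_nonneg _).trans (hp₀.2.1 i)
  have hVeq : hV = fun x y => max (Φ (x, y) ⬝ᵥ μs - phix Φ μs x) 0 := funext₂ hhV
  have hrule : IsRule Xs hV := hVeq ▸ isRule_max_sub_phix hK hΦmeas μs
  obtain ⟨r, hr0, hr1, hmom, hcert⟩ := exists_cond_of_isMin_dualObjective Φ τ lam xi hK hlam hμs
  have hP : empiricalJoint xi r ∈ UncV Φ τ lam xi :=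
    ⟨isProbabilityMeasure_empiricalJoint hn xi hr0 hr1,
      fun i => integral_empiricalJoint xi hr0 (fun z => Φ z i) ▸ hmom i,
      map_fst_empiricalJoint xi hr0 hr1⟩
  refine ⟨hrule, sSup_image_eq_sInf_of_saddle loss (IsRule Xs) _ hrule hP
    (fun p hp => loss_le_dualObjective Φ τ lam xi hn hΦmeas μs hrule (fun x y => ?_) hp)
    (fun h hh => ?_) (fun h hh => ⟨1, ?_⟩)⟩
  · exact hhV x y ▸ le_max_left _ _
  · rw [loss_empiricalJoint hn xi hr0 hr1]
    linarith [hcert h hh]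
  · rintro _ ⟨p, ⟨hp, -, -⟩, rfl⟩
    exact loss_le_one hh p

/-- Theorem 2: the rule `h^V(y|x) = (Φ(x,y)ᵀμ* − φ(μ*,x))₊` is a 0-1 minimax risk
classifier for the uncertainty set with fixed empirical instances' marginal. -/
theorem stmt_4 {d K m n : ℕ} (hK : 0 < K) (hn : 0 < n)
    (Xs : Set (Fin d → ℝ)) (hXs : MeasurableSet Xs)
    (Φ : ↥Xs × Fin K → Fin m → ℝ) (hΦmeas : ∀ i, Measurable fun z => Φ z i)
    (B : ℝ) (hΦbdd : ∀ z i, |Φ z i| ≤ B)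
    (τ lam : Fin m → ℝ)
    (xi : Fin n → ↥Xs)
    (hVne : (UncV Φ τ lam xi).Nonempty)
    (μs : Fin m → ℝ)
    (hμs : ∀ μ : Fin m → ℝ,
      1 - (∑ i, τ i * μs i) + (∑ j, phix Φ μs (xi j)) / n + ∑ i, lam i * |μs i| ≤
      1 - (∑ i, τ i * μ i) + (∑ j, phix Φ μ (xi j)) / n + ∑ i, lam i * |μ i|)
    (hV : ↥Xs → Fin K → ℝ)
    (hhV : ∀ (x : ↥Xs) (y : Fin K),
      hV x y = max ((∑ i, Φ (x, y) i * μs i) - phix Φ μs x) 0) :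
    IsRule Xs hV ∧
    sSup ((fun p => loss hV p) '' UncV Φ τ lam xi)
      = sInf {r : ℝ | ∃ h : ↥Xs → Fin K → ℝ, IsRule Xs h ∧
          r = sSup ((fun p => loss h p) '' UncV Φ τ lam xi)} :=
  stmt_4_general hK hn Xs Φ hΦmeas τ lam xi hVne μs hμs hV hhV

end
end

section
/- If the mean vector is the sample average τ = (1/n)∑_{i=1}^n Φ(x_i,y_i) obtained from samples (x_1,y_1),…,(x_n,y_n) ∈ X×Y, then for every μ ∈ ℝ^m the MRC objective with fixed marginals coincides with an L1-regularized empirical risk with the minimax-hinge (adversarial zero-one) loss: 1 − τᵀμ + (1/n)∑_{i=1}^n φ(μ,x_i) + λᵀ|μ| = (1/n)∑_{i=1}^n max over nonempty C ⊆ Y of [ ∑_{y∈C}(Φ(x_i,y) − Φ(x_i,y_i))ᵀμ + |C| − 1 ] / |C| + λᵀ|μ|. -/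
open MeasureTheory

noncomputable section

/-- With the sample-average mean vector, the MRC objective with fixed marginals equals
L1-regularized ERM with the minimax-hinge (adversarial zero-one) loss. -/
theorem stmt_5 {d K m n : ℕ} (hK : 0 < K) (hn : 0 < n)
    (Xs : Set (Fin d → ℝ)) (hXs : MeasurableSet Xs)
    (Φ : ↥Xs × Fin K → Fin m → ℝ) (hΦmeas : ∀ i, Measurable fun z => Φ z i)
    (B : ℝ) (hΦbdd : ∀ z i, |Φ z i| ≤ B)
    (lam : Fin m → ℝ)
    (samples : Fin n → ↥Xs × Fin K)
    (τ : Fin m → ℝ) (hτ : ∀ i, τ i = (∑ j, Φ (samples j) i) / n) :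
    ∀ μ : Fin m → ℝ,
      1 - (∑ i, τ i * μ i) + (∑ j, phix Φ μ (samples j).1) / n + ∑ i, lam i * |μ i|
      = (∑ j, ⨆ C : {C : Finset (Fin K) // C.Nonempty},
            ((∑ y ∈ C.1, ∑ i, (Φ ((samples j).1, y) i - Φ (samples j) i) * μ i)
              + (C.1.card : ℝ) - 1) / (C.1.card : ℝ)) / n
        + ∑ i, lam i * |μ i| := by
  intro μ
  have hn' : (n : ℝ) ≠ 0 := Nat.cast_ne_zero.mpr hn.ne'
  haveI : Nonempty {C : Finset (Fin K) // C.Nonempty} :=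
    ⟨⟨{⟨0, hK⟩}, Finset.singleton_nonempty _⟩⟩
  have key : ∀ j, (⨆ C : {C : Finset (Fin K) // C.Nonempty},
        ((∑ y ∈ C.1, ∑ i, (Φ ((samples j).1, y) i - Φ (samples j) i) * μ i)
          + (C.1.card : ℝ) - 1) / (C.1.card : ℝ))
      = phix Φ μ (samples j).1 + (1 - ∑ i, Φ (samples j) i * μ i) := by
    intro j
    rw [phix, ciSup_add (Set.Finite.bddAbove (Set.finite_range _))]
    apply iSup_congr
    intro C
    have hc : (C.1.card : ℝ) ≠ 0 := by
      exact_mod_cast Finset.card_ne_zero_of_mem C.2.choose_spec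
    have hsum : ∑ y ∈ C.1, ∑ i, (Φ ((samples j).1, y) i - Φ (samples j) i) * μ i
        = (∑ y ∈ C.1, ∑ i, Φ ((samples j).1, y) i * μ i)
          - (C.1.card : ℝ) * ∑ i, Φ (samples j) i * μ i := by
      simp only [sub_mul, Finset.sum_sub_distrib]
      rw [Finset.sum_const, nsmul_eq_mul]
    rw [hsum]
    field_simp
    ring
  have hsum2 : ∑ i, τ i * μ i = (∑ j, ∑ i, Φ (samples j) i * μ i) / n := by
    rw [Finset.sum_comm, Finset.sum_div]
    exact Finset.sum_congr rfl fun i _ => by rw [hτ i, div_mul_eq_mul_div, Finset.sum_mul]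
  simp only [key, hsum2, Finset.sum_add_distrib, Finset.sum_sub_distrib,
    Finset.sum_const, Finset.card_univ, Fintype.card_fin, nsmul_eq_mul, mul_one]
  field_simp
  ring

end
end

section
/- (Theorem 4) For any classification rule h ∈ T(X,Y), define the lower bound R_(U,h) = sup_{μ ∈ ℝ^m} [ 1 − τᵀμ + inf_{(x,y) ∈ X×Y}{Φ(x,y)ᵀμ − h(y|x)} − λᵀ|μ| ] and the upper bound R̄(U,h) = inf_{μ ∈ ℝ^m} [ 1 − τᵀμ + sup_{(x,y) ∈ X×Y}{Φ(x,y)ᵀμ − h(y|x)} + λᵀ|μ| ]. Then for every p ∈ U it holds that R_(U,h) ≤ ℓ(h,p) ≤ R̄(U,h). Moreover, if U satisfies regularity condition R1 or R2, the supremum defining R_(U,h) and the infimum defining R̄(U,h) are attained. -/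
open MeasureTheory

noncomputable section

/-- Lower-bound dual objective. -/
def Dlow {d K m : ℕ} {Xs : Set (Fin d → ℝ)} (Φ : ↥Xs × Fin K → Fin m → ℝ)
    (τ lam : Fin m → ℝ) (h : ↥Xs → Fin K → ℝ) (μ : Fin m → ℝ) : ℝ :=
  1 - (∑ i, τ i * μ i)
    + (⨅ z : ↥Xs × Fin K, ((∑ i, Φ z i * μ i) - h z.1 z.2))
    - ∑ i, lam i * |μ i|

/-- Regularity condition R1. -/
def CondR1 {d K m : ℕ} (Xs : Set (Fin d → ℝ)) (Φ : ↥Xs × Fin K → Fin m → ℝ)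
    (τ lam : Fin m → ℝ) : Prop :=
  Xs.Finite ∧ (Unc Φ τ lam).Nonempty

/-- Regularity condition R2. -/
def CondR2 {d K m : ℕ} (Xs : Set (Fin d → ℝ)) (Φ : ↥Xs × Fin K → Fin m → ℝ)
    (τ lam : Fin m → ℝ) : Prop :=
  ∃ p ∈ Unc Φ τ lam,
    (∀ i, 0 < lam i → |(∫ z, Φ z i ∂p) - τ i| < lam i) ∧
    ((∀ i, 0 < lam i) ∨
      ∀ W : AffineSubspace ℝ (Fin m → ℝ), (W : Set (Fin m → ℝ)) ≠ Set.univ →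
        ¬ (∀ᵐ z ∂p, Φ z ∈ (W : Set (Fin m → ℝ))))

/-!
Weak duality: for `p ∈ U` and any `μ`, the pointwise bound `h(y|x) ≥ Φ(x,y)ᵀμ - S(μ)`, with
`S(μ) = sup (Φᵀμ - h)`, integrates to `E_p[h] ≥ E_p[Φ]ᵀμ - S(μ)`, and `|E_p[Φ] - τ| ⪯ λ` turns
`E_p[Φ]ᵀμ` into `τᵀμ ± λᵀ|μ|`. Both bounds are of the form `1 ± F_c(±μ)` with
`F_c(μ) = -τᵀμ + sup (Φᵀμ - c) + λᵀ|μ|` for a bounded `c`, so attainment amounts to `F_c`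
having a minimiser.

Under R2 the recession function `F_0` is positive off `0` (strict feasibility makes
`E_p[Φ]ᵀμ - τᵀμ + λᵀ|μ|` positive, or a non-degenerate support makes `sup Φᵀμ - E_p[Φ]ᵀμ`
positive), so `F_c ≥ F_0 - C` is coercive. Under R1, `F_c` is the maximum of finitely many affine
functions and bounded below by weak duality; such a function attains its minimum: either some
direction decreases some pieces while fixing the others, and the decreasing pieces can be
dropped (induction on the number of pieces), or the function is coercive on a complement of the
common kernel of the slopes.
-/

open Filter Topology Matrix

section Coercive

variable {E : Type*} [NormedAddCommGroup E] [NormedSpace ℝ E] [FiniteDimensional ℝ E]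

lemma exists_pos_mul_norm_le_of_homogeneous {r : E → ℝ} (hr : Continuous r)
    (hhom : ∀ t : ℝ, 0 < t → ∀ x, r (t • x) = t * r x) (hpos : ∀ x ≠ 0, 0 < r x) :
    ∃ κ > 0, ∀ x, κ * ‖x‖ ≤ r x := by
  have hr0 : r 0 = 0 := by
    have := hhom 2 two_pos 0
    rw [smul_zero] at this
    linarith
  rcases subsingleton_or_nontrivial E with hE | hE
  · exact ⟨1, one_pos, fun x => by simp [Subsingleton.elim x 0, hr0]⟩
  obtain ⟨u, hu, hmin⟩ := (isCompact_sphere (0 : E) 1).exists_isMinOn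
    (NormedSpace.sphere_nonempty.2 zero_le_one) hr.continuousOn
  have hu0 : u ≠ 0 := ne_zero_of_mem_sphere one_ne_zero ⟨u, hu⟩
  refine ⟨r u, hpos u hu0, fun x => ?_⟩
  rcases eq_or_ne x 0 with rfl | hx
  · simp [hr0]
  have hnx : 0 < ‖x‖ := norm_pos_iff.2 hx
  have hunit : ‖x‖⁻¹ • x ∈ Metric.sphere (0 : E) 1 := by
    simp [norm_smul, hnx.ne']
  calc r u * ‖x‖ ≤ r (‖x‖⁻¹ • x) * ‖x‖ := mul_le_mul_of_nonneg_right (hmin hunit) hnx.le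
    _ = r x := by rw [hhom _ (inv_pos.2 hnx), mul_right_comm, inv_mul_cancel₀ hnx.ne', one_mul]

lemma Continuous.exists_forall_le_of_homogeneous_minorant {F r : E → ℝ} (hF : Continuous F)
    (hr : Continuous r) (hhom : ∀ t : ℝ, 0 < t → ∀ x, r (t • x) = t * r x)
    (hpos : ∀ x ≠ 0, 0 < r x) (C : ℝ) (hle : ∀ x, r x + C ≤ F x) :
    ∃ x₀, ∀ x, F x₀ ≤ F x := by
  obtain ⟨κ, hκ, hκr⟩ := exists_pos_mul_norm_le_of_homogeneous hr hhom hpos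
  refine hF.exists_forall_le (tendsto_atTop_mono (fun x => ?_)
    (tendsto_atTop_add_const_right _ C (tendsto_norm_cocompact_atTop.const_mul_atTop hκ)))
  linarith [hκr x, hle x]

end Coercive

section MaxAffine

lemma eventually_forall_apply_add_smul_le {E ι : Type*} [AddCommGroup E] [Module ℝ E]
    (a : ι → E →ₗ[ℝ] ℝ) (b : ι → ℝ) {s : Finset ι} {d : E} (hd : ∀ j ∈ s, a j d ≤ 0)
    (μ : E) {r : ℝ} (hr : ∀ j ∈ s, a j d = 0 → a j μ + b j ≤ r) :
    ∀ᶠ t : ℝ in atTop, ∀ j ∈ s, a j (μ + t • d) + b j ≤ r := by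
  refine (eventually_all_finset s).2 fun j hj => ?_
  have hexp : ∀ t : ℝ, a j (μ + t • d) + b j = a j μ + b j + t * a j d := fun t => by
    simp only [map_add, map_smul, smul_eq_mul]; ring
  rcases (hd j hj).eq_or_lt with h0 | hneg
  · exact Eventually.of_forall fun t => by rw [hexp, h0, mul_zero, add_zero]; exact hr j hj h0
  · filter_upwards [eventually_ge_atTop ((a j μ + b j - r) / -a j d)] with t ht
    rw [div_le_iff₀ (neg_pos.2 hneg)] at ht
    linarith [hexp t]

variable {E ι : Type*} [NormedAddCommGroup E] [NormedSpace ℝ E] [FiniteDimensional ℝ E]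
  (a : ι → E →ₗ[ℝ] ℝ) (b : ι → ℝ)

theorem exists_forall_sup'_le_of_forall_nonpos_eq_zero (s : Finset ι) (hs : s.Nonempty)
    (hdesc : ∀ d, (∀ j ∈ s, a j d ≤ 0) → ∀ j ∈ s, a j d = 0) :
    ∃ μ₀, ∀ μ, s.sup' hs (fun j => a j μ₀ + b j) ≤ s.sup' hs (fun j => a j μ + b j) := by
  -- The maximum is invariant under the common kernel `K` of the slopes and, by `hdesc`,
  -- coercive on a complement of `K`.
  let K : Submodule ℝ E := ⨅ j ∈ s, LinearMap.ker (a j)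
  have hK : ∀ μ k, k ∈ K → ∀ j ∈ s, a j (μ + k) = a j μ := fun μ k hk j hj => by
    simp only [K, Submodule.mem_iInf, LinearMap.mem_ker] at hk
    rw [map_add, hk j hj, add_zero]
  obtain ⟨C, hKC⟩ := K.exists_isCompl
  have ha : ∀ j, Continuous fun c : C => a j c := fun j =>
    (a j).continuous_of_finiteDimensional.comp continuous_subtype_val
  obtain ⟨c₀, hc₀⟩ := Continuous.exists_forall_le_of_homogeneous_minorant
    (F := fun c : C => s.sup' hs fun j => a j c + b j)
    (r := fun c : C => s.sup' hs fun j => a j c)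
    (Continuous.finset_sup'_apply hs fun j _ => (ha j).add continuous_const)
    (Continuous.finset_sup'_apply hs fun j _ => ha j)
    (fun t ht c => by simp only [Submodule.coe_smul, map_smul, smul_eq_mul,
      Finset.mul₀_sup' ht.le])
    (fun c hc => by
      have hcK : (c : E) ∉ K := fun hcK =>
        hc (Subtype.ext (Submodule.disjoint_def.1 hKC.disjoint _ hcK c.2))
      obtain ⟨j, hj, hne⟩ : ∃ j ∈ s, a j c ≠ 0 := by
        by_contra! h
        exact hcK (by simpa [K, Submodule.mem_iInf] using h)
      obtain ⟨k, hk, hpos⟩ : ∃ k ∈ s, 0 < a k c := by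
        by_contra! h
        exact hne (hdesc c h j hj)
      exact (Finset.lt_sup'_iff hs).2 ⟨k, hk, hpos⟩)
    (s.inf' hs b) (fun c => by
      rw [Finset.sup'_add]
      exact Finset.sup'_le _ _ fun j hj => (add_le_add_right (Finset.inf'_le b hj) _).trans
        (Finset.le_sup' (fun j => a j c + b j) hj))
  refine ⟨c₀, fun μ => ?_⟩
  obtain ⟨k, hk, c, hc, rfl⟩ :=
    Submodule.mem_sup.1 (hKC.sup_eq_top ▸ Submodule.mem_top : μ ∈ K ⊔ C)
  refine (hc₀ ⟨c, hc⟩).trans (Finset.sup'_congr hs rfl fun j hj => ?_).ge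
  rw [add_comm k, hK c k hk j hj]

theorem exists_forall_sup'_le (s : Finset ι) (hs : s.Nonempty)
    (hbdd : BddBelow (Set.range fun μ => s.sup' hs fun j => a j μ + b j)) :
    ∃ μ₀, ∀ μ, s.sup' hs (fun j => a j μ₀ + b j) ≤ s.sup' hs (fun j => a j μ + b j) := by
  induction s using Finset.strongInduction with
  | H s ih =>
  by_cases hdesc : ∀ d, (∀ j ∈ s, a j d ≤ 0) → ∀ j ∈ s, a j d = 0
  · exact exists_forall_sup'_le_of_forall_nonpos_eq_zero a b s hs hdesc
  -- Along a descent direction `d` the pieces with `a j d < 0` eventually drop out of the max.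
  push Not at hdesc
  obtain ⟨d, hd, j₀, hj₀, hj₀d⟩ := hdesc
  obtain ⟨L, hL⟩ := hbdd
  set s' := s.filter fun j => a j d = 0
  have hdrop : ∀ μ r, (∀ j ∈ s', a j μ + b j ≤ r) →
      ∃ t : ℝ, s.sup' hs (fun j => a j (μ + t • d) + b j) ≤ r := fun μ r hr =>
    ((eventually_forall_apply_add_smul_le a b hd μ fun j hj h0 =>
      hr j (Finset.mem_filter.2 ⟨hj, h0⟩)).exists).imp fun _ ht => Finset.sup'_le _ _ ht
  have hs' : s'.Nonempty := by
    by_contra hempty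
    obtain ⟨t, ht⟩ := hdrop 0 (L - 1) fun j hj => absurd ⟨j, hj⟩ hempty
    linarith [hL ⟨0 + t • d, rfl⟩]
  have hle : ∀ μ, ∃ t : ℝ,
      s.sup' hs (fun j => a j (μ + t • d) + b j) ≤ s'.sup' hs' (fun j => a j μ + b j) :=
    fun μ => hdrop μ _ fun j hj => Finset.le_sup' (fun j => a j μ + b j) hj
  obtain ⟨μ₀, hμ₀⟩ := ih s' (Finset.filter_ssubset.2 ⟨j₀, hj₀, hj₀d⟩) hs' ⟨L, by
    rintro _ ⟨μ, rfl⟩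
    obtain ⟨t, ht⟩ := hle μ
    exact (hL ⟨μ + t • d, rfl⟩).trans ht⟩
  obtain ⟨t, ht⟩ := hle μ₀
  exact ⟨μ₀ + t • d, fun μ => ht.trans ((hμ₀ μ).trans
    (Finset.sup'_mono _ (Finset.filter_subset _ s) hs'))⟩

end MaxAffine

section DotProduct

lemma abs_dotProduct_le_of_abs_le {n : Type*} [Fintype n] {v : n → ℝ} {B : ℝ}
    (hv : ∀ i, |v i| ≤ B) (w : n → ℝ) : |v ⬝ᵥ w| ≤ Fintype.card n * B * ‖w‖ := by
  calc |v ⬝ᵥ w| ≤ ∑ i, |v i * w i| := Finset.abs_sum_le_sum_abs _ _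
    _ ≤ ∑ _i : n, B * ‖w‖ := Finset.sum_le_sum fun i _ => by
        rw [abs_mul, ← Real.norm_eq_abs (w i)]
        exact mul_le_mul (hv i) (norm_le_pi_norm w i) (norm_nonneg _) ((abs_nonneg _).trans (hv i))
    _ = Fintype.card n * B * ‖w‖ := by simp [mul_assoc]

lemma abs_dotProduct_sub_le {n : Type*} [Fintype n] {E τ lam : n → ℝ}
    (h : ∀ i, |E i - τ i| ≤ lam i) (μ : n → ℝ) :
    |E ⬝ᵥ μ - τ ⬝ᵥ μ| ≤ ∑ i, lam i * |μ i| := by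
  rw [← sub_dotProduct]
  refine (Finset.abs_sum_le_sum_abs _ _).trans (Finset.sum_le_sum fun i _ => ?_)
  rw [abs_mul]
  exact mul_le_mul_of_nonneg_right (h i) (abs_nonneg _)

lemma dotProduct_sub_add_sum_mul_abs_pos {n : Type*} [Fintype n] {E τ lam μ : n → ℝ}
    (hlam : ∀ i, |E i - τ i| < lam i) (hμ : μ ≠ 0) :
    0 < E ⬝ᵥ μ - τ ⬝ᵥ μ + ∑ i, lam i * |μ i| := by
  have hterm : ∀ i, (lam i - |E i - τ i|) * |μ i| ≤ (E i - τ i) * μ i + lam i * |μ i| :=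
    fun i => by nlinarith [neg_abs_le ((E i - τ i) * μ i), abs_mul (E i - τ i) (μ i)]
  obtain ⟨i₀, hi₀⟩ := Function.ne_iff.1 hμ
  rw [← sub_dotProduct, dotProduct, ← Finset.sum_add_distrib]
  refine Finset.sum_pos' (fun i _ => ?_) ⟨i₀, Finset.mem_univ _, ?_⟩
  · exact (mul_nonneg (sub_nonneg.2 (hlam i).le) (abs_nonneg _)).trans (hterm i)
  · exact (mul_pos (sub_pos.2 (hlam i₀)) (abs_pos.2 hi₀)).trans_le (hterm i₀)

end DotProduct

section DualBound

variable {Z : Type*} {m : ℕ}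

/-- `R̄(U,h) = 1 + inf_μ dualBound h μ` and `R_(U,h) = 1 - inf_μ dualBound (-h) μ`. -/
def dualBound (Φ : Z → Fin m → ℝ) (τ lam : Fin m → ℝ) (c : Z → ℝ) (μ : Fin m → ℝ) : ℝ :=
  -(τ ⬝ᵥ μ) + (⨆ z, (Φ z ⬝ᵥ μ - c z)) + ∑ i, lam i * |μ i|

variable (Φ : Z → Fin m → ℝ) (τ lam : Fin m → ℝ) {B C : ℝ} {c : Z → ℝ}

lemma bddAbove_range_dotProduct_sub (hΦ : ∀ z i, |Φ z i| ≤ B) (hc : ∀ z, |c z| ≤ C)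
    (μ : Fin m → ℝ) : BddAbove (Set.range fun z => Φ z ⬝ᵥ μ - c z) :=
  ⟨m * B * ‖μ‖ + C, by
    rintro _ ⟨z, rfl⟩
    have := abs_dotProduct_le_of_abs_le (hΦ z) μ
    simp only [Fintype.card_fin] at this
    linarith [abs_le.1 this, abs_le.1 (hc z)]⟩

lemma continuous_dualBound [Nonempty Z] (hΦ : ∀ z i, |Φ z i| ≤ B) (hc : ∀ z, |c z| ≤ C) :
    Continuous (dualBound Φ τ lam c) := by
  have hsup : LipschitzWith (m * B).toNNReal fun μ => ⨆ z, (Φ z ⬝ᵥ μ - c z) :=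
    LipschitzWith.of_le_add_mul' _ fun μ ν => ciSup_le fun z => by
      have := abs_dotProduct_le_of_abs_le (hΦ z) (μ - ν)
      rw [Fintype.card_fin, dotProduct_sub, ← dist_eq_norm] at this
      linarith [abs_le.1 this, le_ciSup (bddAbove_range_dotProduct_sub Φ hΦ hc ν) z]
  have := hsup.continuous
  unfold dualBound
  fun_prop

lemma dualBound_zero_smul {t : ℝ} (ht : 0 ≤ t) (μ : Fin m → ℝ) :
    dualBound Φ τ lam 0 (t • μ) = t * dualBound Φ τ lam 0 μ := by
  simp only [dualBound, Pi.zero_apply, sub_zero, dotProduct_smul, smul_eq_mul, Pi.smul_apply,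
    abs_mul, abs_of_nonneg ht, ← Real.mul_iSup_of_nonneg ht, mul_add, mul_neg, Finset.mul_sum,
    mul_left_comm (lam _) t]

lemma dualBound_zero_sub_le [Nonempty Z] (hΦ : ∀ z i, |Φ z i| ≤ B) (hc : ∀ z, |c z| ≤ C)
    (μ : Fin m → ℝ) : dualBound Φ τ lam 0 μ - C ≤ dualBound Φ τ lam c μ := by
  have : (⨆ z, (Φ z ⬝ᵥ μ - 0)) ≤ (⨆ z, (Φ z ⬝ᵥ μ - c z)) + C := ciSup_le fun z => by
    linarith [(abs_le.1 (hc z)).2, le_ciSup (bddAbove_range_dotProduct_sub Φ hΦ hc μ) z]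
  simp only [dualBound, Pi.zero_apply]
  linarith

/-- Writing `λ i * |μ i| = max (λ i * μ i) (-λ i * μ i)` and choosing the signs jointly. -/
lemma dualBound_eq_sup' [Fintype Z] [Nonempty Z] (hlam : ∀ i, 0 ≤ lam i) (c : Z → ℝ)
    (μ : Fin m → ℝ) :
    dualBound Φ τ lam c μ = (Finset.univ : Finset (Z × (Fin m → Bool))).sup' Finset.univ_nonempty
      fun q => dotProductBilin ℝ ℝ (Φ q.1 - τ + fun i => if q.2 i then lam i else -lam i) μ
        + -c q.1 := by
  have hval : ∀ q : Z × (Fin m → Bool),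
      dotProductBilin ℝ ℝ (Φ q.1 - τ + fun i => if q.2 i then lam i else -lam i) μ + -c q.1
        = -(τ ⬝ᵥ μ) + (Φ q.1 ⬝ᵥ μ - c q.1) + ∑ i, (if q.2 i then lam i else -lam i) * μ i := by
    intro q
    rw [dotProductBilin_apply_apply, add_dotProduct, sub_dotProduct]
    simp only [dotProduct]
    ring
  simp only [hval]
  apply le_antisymm
  · obtain ⟨z₀, hz₀⟩ := exists_eq_ciSup_of_finite (f := fun z => Φ z ⬝ᵥ μ - c z)
    refine le_of_eq_of_le ?_ (Finset.le_sup' _ (Finset.mem_univ (z₀, fun i => decide (0 ≤ μ i))))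
    rw [dualBound, ← hz₀]
    congr 1
    refine Finset.sum_congr rfl fun i _ => ?_
    by_cases h : 0 ≤ μ i
    · simp [h, abs_of_nonneg h]
    · simp [h, abs_of_neg (not_le.1 h)]
  · refine Finset.sup'_le _ _ fun q _ => add_le_add
      (add_le_add le_rfl (le_ciSup (Set.finite_range fun z => Φ z ⬝ᵥ μ - c z).bddAbove q.1))
      (Finset.sum_le_sum fun i _ => ?_)
    split_ifs
    · exact mul_le_mul_of_nonneg_left (le_abs_self _) (hlam i)
    · rw [neg_mul, ← mul_neg]
      exact mul_le_mul_of_nonneg_left (neg_le_abs _) (hlam i)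

theorem exists_forall_dualBound_le_of_finite [Finite Z] [Nonempty Z] (hlam : ∀ i, 0 ≤ lam i)
    (c : Z → ℝ) (hbdd : BddBelow (Set.range (dualBound Φ τ lam c))) :
    ∃ μ₀, ∀ μ, dualBound Φ τ lam c μ₀ ≤ dualBound Φ τ lam c μ := by
  have := Fintype.ofFinite Z
  rw [funext (dualBound_eq_sup' Φ τ lam hlam c)] at hbdd ⊢
  exact exists_forall_sup'_le _ _ _ _ hbdd

theorem exists_forall_dualBound_le_of_pos [Nonempty Z] (hΦ : ∀ z i, |Φ z i| ≤ B)
    (hc : ∀ z, |c z| ≤ C) (hpos : ∀ μ ≠ 0, 0 < dualBound Φ τ lam 0 μ) :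
    ∃ μ₀, ∀ μ, dualBound Φ τ lam c μ₀ ≤ dualBound Φ τ lam c μ :=
  (continuous_dualBound Φ τ lam hΦ hc).exists_forall_le_of_homogeneous_minorant
    (continuous_dualBound Φ τ lam hΦ (C := 0) (by simp))
    (fun _ ht => dualBound_zero_smul Φ τ lam ht.le)
    hpos (-C) fun μ => by linarith [dualBound_zero_sub_le Φ τ lam hΦ hc μ]

end DualBound

section Measure

variable {Z : Type*} {m : ℕ} [MeasurableSpace Z] {Φ : Z → Fin m → ℝ} {τ lam : Fin m → ℝ}
  {B C : ℝ} {c : Z → ℝ}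

lemma integrable_of_abs_le (p : Measure Z) [IsFiniteMeasure p] {f : Z → ℝ} (hf : Measurable f)
    (hC : ∀ z, |f z| ≤ C) : Integrable f p :=
  .of_bound hf.aestronglyMeasurable C (ae_of_all _ hC)

lemma integral_le_ciSup (p : Measure Z) [IsProbabilityMeasure p] {f : Z → ℝ}
    (hf : Integrable f p) (hbdd : BddAbove (Set.range f)) : ∫ z, f z ∂p ≤ ⨆ z, f z := by
  simpa using integral_mono hf (integrable_const _) fun z => le_ciSup hbdd z

lemma integrable_dotProduct (p : Measure Z) [IsFiniteMeasure p]
    (hΦm : ∀ i, Measurable fun z => Φ z i) (hΦ : ∀ z i, |Φ z i| ≤ B) (μ : Fin m → ℝ) :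
    Integrable (fun z => Φ z ⬝ᵥ μ) p :=
  integrable_finsetSum _ fun i _ => (integrable_of_abs_le p (hΦm i) (hΦ · i)).mul_const _

lemma integral_dotProduct (p : Measure Z) [IsFiniteMeasure p]
    (hΦm : ∀ i, Measurable fun z => Φ z i) (hΦ : ∀ z i, |Φ z i| ≤ B) (μ : Fin m → ℝ) :
    ∫ z, Φ z ⬝ᵥ μ ∂p = (fun i => ∫ z, Φ z i ∂p) ⬝ᵥ μ := by
  simp only [dotProduct]
  rw [integral_finsetSum _ fun i _ => (integrable_of_abs_le p (hΦm i) (hΦ · i)).mul_const _]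
  simp only [integral_mul_const]

lemma neg_integral_le_dualBound (p : Measure Z) [IsProbabilityMeasure p]
    (hΦm : ∀ i, Measurable fun z => Φ z i) (hΦ : ∀ z i, |Φ z i| ≤ B)
    (hfeas : ∀ i, |∫ z, Φ z i ∂p - τ i| ≤ lam i) (hcm : Measurable c) (hc : ∀ z, |c z| ≤ C)
    (μ : Fin m → ℝ) : -∫ z, c z ∂p ≤ dualBound Φ τ lam c μ := by
  have hdot := integrable_dotProduct p hΦm hΦ μ
  have hci : Integrable c p := integrable_of_abs_le p hcm hc
  have hmean : ∫ z, (Φ z ⬝ᵥ μ - c z) ∂p = (fun i => ∫ z, Φ z i ∂p) ⬝ᵥ μ - ∫ z, c z ∂p := by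
    rw [integral_sub hdot hci, integral_dotProduct p hΦm hΦ]
  have hsup := integral_le_ciSup p (f := fun z => Φ z ⬝ᵥ μ - c z) (hdot.sub hci)
    (bddAbove_range_dotProduct_sub Φ hΦ hc μ)
  have hτ := abs_le.1 (abs_dotProduct_sub_le hfeas μ)
  rw [dualBound]
  linarith

lemma dotProduct_integral_le_ciSup (p : Measure Z) [IsProbabilityMeasure p]
    (hΦm : ∀ i, Measurable fun z => Φ z i) (hΦ : ∀ z i, |Φ z i| ≤ B) (μ : Fin m → ℝ) :
    (fun i => ∫ z, Φ z i ∂p) ⬝ᵥ μ ≤ ⨆ z, Φ z ⬝ᵥ μ := by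
  rw [← integral_dotProduct p hΦm hΦ]
  simpa using integral_le_ciSup p (integrable_dotProduct p hΦm hΦ μ)
    (by simpa using bddAbove_range_dotProduct_sub Φ hΦ (c := 0) (C := 0) (by simp) μ)

lemma dotProduct_integral_lt_ciSup (p : Measure Z) [IsProbabilityMeasure p]
    (hΦm : ∀ i, Measurable fun z => Φ z i) (hΦ : ∀ z i, |Φ z i| ≤ B)
    (hsupp : ∀ W : AffineSubspace ℝ (Fin m → ℝ), (W : Set (Fin m → ℝ)) ≠ Set.univ →
      ¬ ∀ᵐ z ∂p, Φ z ∈ (W : Set (Fin m → ℝ)))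
    {μ : Fin m → ℝ} (hμ : μ ≠ 0) : (fun i => ∫ z, Φ z i ∂p) ⬝ᵥ μ < ⨆ z, Φ z ⬝ᵥ μ := by
  have hdot := integrable_dotProduct p hΦm hΦ μ
  set S := ⨆ z, Φ z ⬝ᵥ μ
  refine (dotProduct_integral_le_ciSup p hΦm hΦ μ).lt_of_ne fun heq => ?_
  -- Otherwise `Φ` lies almost surely in the hyperplane `{v | μ ⬝ᵥ v = S}`.
  have hae : (fun z => S - Φ z ⬝ᵥ μ) =ᵐ[p] 0 := by
    refine (integral_eq_zero_iff_of_nonneg (fun z => sub_nonneg.2 (le_ciSup ?_ z))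
      ((integrable_const S).sub hdot)).1 ?_
    · simpa using bddAbove_range_dotProduct_sub Φ hΦ (c := 0) (C := 0) (by simp) μ
    · rw [integral_sub (integrable_const S) hdot, integral_dotProduct p hΦm hΦ, heq]
      simp [S]
  let W : AffineSubspace ℝ (Fin m → ℝ) :=
    (affineSpan ℝ {S}).comap (dotProductBilin ℝ ℝ μ).toAffineMap
  have hmem : ∀ v, v ∈ (W : Set (Fin m → ℝ)) ↔ μ ⬝ᵥ v = S := fun v => by simp [W]
  have hμμ : μ ⬝ᵥ μ ≠ 0 := dotProduct_self_eq_zero.not.2 hμ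
  refine hsupp W (fun hW => ?_) (hae.mono fun z hz => (hmem _).2 ?_)
  · have := (hmem (((S + 1) / (μ ⬝ᵥ μ)) • μ)).1 (hW ▸ Set.mem_univ _)
    rw [dotProduct_smul, smul_eq_mul, div_mul_cancel₀ _ hμμ] at this
    linarith
  · rw [dotProduct_comm]
    exact (sub_eq_zero.1 hz).symm

lemma dualBound_zero_pos (p : Measure Z) [IsProbabilityMeasure p]
    (hΦm : ∀ i, Measurable fun z => Φ z i) (hΦ : ∀ z i, |Φ z i| ≤ B)
    (hfeas : ∀ i, |∫ z, Φ z i ∂p - τ i| ≤ lam i)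
    (hstrict : ∀ i, 0 < lam i → |∫ z, Φ z i ∂p - τ i| < lam i)
    (hreg : (∀ i, 0 < lam i) ∨
      ∀ W : AffineSubspace ℝ (Fin m → ℝ), (W : Set (Fin m → ℝ)) ≠ Set.univ →
        ¬ ∀ᵐ z ∂p, Φ z ∈ (W : Set (Fin m → ℝ)))
    {μ : Fin m → ℝ} (hμ : μ ≠ 0) : 0 < dualBound Φ τ lam 0 μ := by
  set E := fun i => ∫ z, Φ z i ∂p
  have hsplit : dualBound Φ τ lam 0 μ =
      ((⨆ z, Φ z ⬝ᵥ μ) - E ⬝ᵥ μ) + (E ⬝ᵥ μ - τ ⬝ᵥ μ + ∑ i, lam i * |μ i|) := by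
    simp only [dualBound, Pi.zero_apply, sub_zero]
    ring
  rw [hsplit]
  rcases hreg with hlam | hsupp
  · have := dotProduct_sub_add_sum_mul_abs_pos (fun i => hstrict i (hlam i)) hμ
    linarith [dotProduct_integral_le_ciSup p hΦm hΦ μ]
  · have := dotProduct_integral_lt_ciSup p hΦm hΦ hsupp hμ
    linarith [abs_le.1 (abs_dotProduct_sub_le hfeas μ)]

end Measure

section Classification

variable {d K m : ℕ} {Xs : Set (Fin d → ℝ)} {Φ : ↥Xs × Fin K → Fin m → ℝ} {τ lam : Fin m → ℝ}

lemma Real.iInf_eq_neg_iSup_neg {ι : Sort*} (g : ι → ℝ) : ⨅ i, g i = -⨆ i, -g i := by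
  simp only [iInf, Real.sInf_def, ← Set.image_neg_eq_neg, ← Set.range_comp, iSup, neg_inj]
  rfl

lemma Dup_eq_one_add_dualBound (h : ↥Xs → Fin K → ℝ) (μ : Fin m → ℝ) :
    Dup Φ τ lam h μ = 1 + dualBound Φ τ lam (fun z => h z.1 z.2) μ := by
  rw [Dup, dualBound]
  simp only [dotProduct]
  ring

lemma Dlow_eq_one_sub_dualBound (h : ↥Xs → Fin K → ℝ) (μ : Fin m → ℝ) :
    Dlow Φ τ lam h μ = 1 - dualBound Φ τ lam (fun z => -h z.1 z.2) (-μ) := by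
  rw [Dlow, dualBound, Real.iInf_eq_neg_iSup_neg]
  simp only [dotProduct, Pi.neg_apply, mul_neg, abs_neg, Finset.sum_neg_distrib, sub_neg_eq_add,
    neg_sub, neg_add_eq_sub]
  ring

lemma loss_eq_one_sub_integral (h : ↥Xs → Fin K → ℝ) (p : Measure (↥Xs × Fin K))
    [IsProbabilityMeasure p] (hint : Integrable (fun z => h z.1 z.2) p) :
    loss h p = 1 - ∫ z, h z.1 z.2 ∂p := by
  rw [loss, integral_sub (integrable_const 1) hint]
  simp

theorem exists_forall_dualBound_le {B C : ℝ} {c : ↥Xs × Fin K → ℝ}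
    (hΦm : ∀ i, Measurable fun z => Φ z i) (hΦ : ∀ z i, |Φ z i| ≤ B) (hcm : Measurable c)
    (hc : ∀ z, |c z| ≤ C) (hreg : CondR1 Xs Φ τ lam ∨ CondR2 Xs Φ τ lam) :
    ∃ μ₀, ∀ μ, dualBound Φ τ lam c μ₀ ≤ dualBound Φ τ lam c μ := by
  rcases hreg with ⟨hfin, p, hp, hfeas⟩ | ⟨p, ⟨hp, hfeas⟩, hstrict, hreg⟩
  · have := hfin.to_subtype
    have := nonempty_of_isProbabilityMeasure p
    exact exists_forall_dualBound_le_of_finite Φ τ lam (fun i => (abs_nonneg _).trans (hfeas i)) c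
      ⟨-∫ z, c z ∂p, by
        rintro _ ⟨μ, rfl⟩
        exact neg_integral_le_dualBound p hΦm hΦ hfeas hcm hc μ⟩
  · have := nonempty_of_isProbabilityMeasure p
    exact exists_forall_dualBound_le_of_pos Φ τ lam hΦ hc fun μ hμ =>
      dualBound_zero_pos p hΦm hΦ hfeas hstrict hreg hμ

end Classification

theorem stmt_8_general {d K m : ℕ}
    (Xs : Set (Fin d → ℝ))
    (Φ : ↥Xs × Fin K → Fin m → ℝ) (hΦmeas : ∀ i, Measurable fun z => Φ z i)
    (B : ℝ) (hΦbdd : ∀ z i, |Φ z i| ≤ B)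
    (τ lam : Fin m → ℝ)
    (h : ↥Xs → Fin K → ℝ) (hrule : IsRule Xs h) :
    (∀ p ∈ Unc Φ τ lam,
      (⨆ μ : Fin m → ℝ, Dlow Φ τ lam h μ) ≤ loss h p ∧
      loss h p ≤ ⨅ μ : Fin m → ℝ, Dup Φ τ lam h μ) ∧
    ((CondR1 Xs Φ τ lam ∨ CondR2 Xs Φ τ lam) →
      (∃ μl : Fin m → ℝ, Dlow Φ τ lam h μl = ⨆ μ : Fin m → ℝ, Dlow Φ τ lam h μ) ∧
      (∃ μu : Fin m → ℝ, Dup Φ τ lam h μu = ⨅ μ : Fin m → ℝ, Dup Φ τ lam h μ)) := by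
  obtain ⟨h_nonneg, h_sum, h_meas⟩ := hrule
  have hc : ∀ z : ↥Xs × Fin K, |h z.1 z.2| ≤ 1 := fun z => abs_le.2
    ⟨by linarith [h_nonneg z.1 z.2],
      h_sum z.1 ▸ Finset.single_le_sum (fun y _ => h_nonneg z.1 y) (Finset.mem_univ z.2)⟩
  have hcm : Measurable fun z : ↥Xs × Fin K => h z.1 z.2 :=
    measurable_from_prod_countable_left fun y => h_meas y
  have hnc : ∀ z : ↥Xs × Fin K, |-h z.1 z.2| ≤ 1 := fun z => (abs_neg _).trans_le (hc z)
  have hncm : Measurable fun z : ↥Xs × Fin K => -h z.1 z.2 := hcm.neg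
  refine ⟨fun p ⟨hp, hfeas⟩ => ⟨ciSup_le fun μ => ?_, le_ciInf fun μ => ?_⟩, fun hreg => ⟨?_, ?_⟩⟩
  · have := neg_integral_le_dualBound p hΦmeas hΦbdd hfeas hncm hnc (-μ)
    rw [integral_neg, neg_neg] at this
    rw [Dlow_eq_one_sub_dualBound, loss_eq_one_sub_integral h p (integrable_of_abs_le p hcm hc)]
    linarith
  · have := neg_integral_le_dualBound p hΦmeas hΦbdd hfeas hcm hc μ
    rw [Dup_eq_one_add_dualBound, loss_eq_one_sub_integral h p (integrable_of_abs_le p hcm hc)]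
    linarith
  · obtain ⟨μ₀, hμ₀⟩ := exists_forall_dualBound_le hΦmeas hΦbdd hncm hnc hreg
    refine ⟨-μ₀, (IsGreatest.csSup_eq (s := Set.range (Dlow Φ τ lam h))
      ⟨⟨-μ₀, rfl⟩, Set.forall_mem_range.2 fun μ => ?_⟩).symm⟩
    rw [Dlow_eq_one_sub_dualBound, Dlow_eq_one_sub_dualBound, neg_neg]
    linarith [hμ₀ (-μ)]
  · obtain ⟨μ₀, hμ₀⟩ := exists_forall_dualBound_le hΦmeas hΦbdd hcm hc hreg
    refine ⟨μ₀, (IsLeast.csInf_eq (s := Set.range (Dup Φ τ lam h))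
      ⟨⟨μ₀, rfl⟩, Set.forall_mem_range.2 fun μ => ?_⟩).symm⟩
    rw [Dup_eq_one_add_dualBound, Dup_eq_one_add_dualBound]
    linarith [hμ₀ μ]

/-- Theorem 4: `R_(U,h) = sup_μ Dlow(μ)` and `R̄(U,h) = inf_μ Dup(μ)` sandwich the expected
0-1 loss over all distributions in `U`; under R1 or R2 the sup and inf are attained. -/
theorem stmt_8 {d K m : ℕ} (hK : 0 < K)
    (Xs : Set (Fin d → ℝ)) (hXs : MeasurableSet Xs)
    (Φ : ↥Xs × Fin K → Fin m → ℝ) (hΦmeas : ∀ i, Measurable fun z => Φ z i)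
    (B : ℝ) (hΦbdd : ∀ z i, |Φ z i| ≤ B)
    (τ lam : Fin m → ℝ)
    (h : ↥Xs → Fin K → ℝ) (hrule : IsRule Xs h) :
    (∀ p ∈ Unc Φ τ lam,
      (⨆ μ : Fin m → ℝ, Dlow Φ τ lam h μ) ≤ loss h p ∧
      loss h p ≤ ⨅ μ : Fin m → ℝ, Dup Φ τ lam h μ) ∧
    ((CondR1 Xs Φ τ lam ∨ CondR2 Xs Φ τ lam) →
      (∃ μl : Fin m → ℝ, Dlow Φ τ lam h μl = ⨆ μ : Fin m → ℝ, Dlow Φ τ lam h μ) ∧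
      (∃ μu : Fin m → ℝ, Dup Φ τ lam h μu = ⨅ μ : Fin m → ℝ, Dup Φ τ lam h μ)) :=
  stmt_8_general Xs Φ hΦmeas B hΦbdd τ lam h hrule

end
end

section
/- (Theorem 6, bound (14)) Let p* be a Borel probability distribution on X×Y with feature expectation τ_∞ = E_{p*}{Φ}, let μ* be a minimizer of min_{μ ∈ ℝ^m} 1 − τᵀμ + φ(μ) + λᵀ|μ| with optimal value R̄(U), and let h^U be a classification rule satisfying h^U(y|x) ≥ Φ(x,y)ᵀμ* − φ(μ*) for all x ∈ X and y ∈ Y. Then the error probability R(h^U) = ℓ(h^U,p*) satisfies R(h^U) ≤ R̄(U) + (|τ_∞ − τ| − λ)ᵀ|μ*|. -/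
open MeasureTheory

noncomputable section

/-- Theorem 6, bound (14): `R(h^U) ≤ R̄(U) + (|τ_∞ − τ| − λ)ᵀ|μ*|`. -/
theorem stmt_10 {d K m : ℕ} (hK : 0 < K)
    (Xs : Set (Fin d → ℝ)) (hXs : MeasurableSet Xs)
    (Φ : ↥Xs × Fin K → Fin m → ℝ) (hΦmeas : ∀ i, Measurable fun z => Φ z i)
    (B : ℝ) (hΦbdd : ∀ z i, |Φ z i| ≤ B)
    (τ lam : Fin m → ℝ)
    (pstar : Measure (↥Xs × Fin K)) (hpstar : IsProbabilityMeasure pstar)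
    (τinf : Fin m → ℝ) (hτinf : ∀ i, τinf i = ∫ z, Φ z i ∂pstar)
    (μs : Fin m → ℝ)
    (hμs : ∀ μ : Fin m → ℝ,
      1 - (∑ i, τ i * μs i) + phi Φ μs + ∑ i, lam i * |μs i| ≤
      1 - (∑ i, τ i * μ i) + phi Φ μ + ∑ i, lam i * |μ i|)
    (h : ↥Xs → Fin K → ℝ) (hrule : IsRule Xs h)
    (hge : ∀ (x : ↥Xs) (y : Fin K), (∑ i, Φ (x, y) i * μs i) - phi Φ μs ≤ h x y) :
    loss h pstar
      ≤ (1 - (∑ i, τ i * μs i) + phi Φ μs + ∑ i, lam i * |μs i|)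
        + ∑ i, (|τinf i - τ i| - lam i) * |μs i| := by
  obtain ⟨hpos, hsum, hmeas⟩ := hrule
  set φ := phi Φ μs with hφ
  -- integrability facts
  have hΦint : ∀ i, Integrable (fun z => Φ z i) pstar := fun i =>
    Integrable.mono' (integrable_const B) (hΦmeas i).aestronglyMeasurable
      (ae_of_all _ fun z => by simpa using hΦbdd z i)
  have hgint : Integrable (fun z : ↥Xs × Fin K => ∑ i, Φ z i * μs i) pstar :=
    integrable_finset_sum _ fun i _ => (hΦint i).mul_const _
  have hhmeas : Measurable fun z : ↥Xs × Fin K => h z.1 z.2 :=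
    measurable_from_prod_countable_left fun y => hmeas y
  have hle1 : ∀ x y, h x y ≤ 1 := by
    intro x y
    calc h x y ≤ ∑ y', h x y' :=
          Finset.single_le_sum (fun y' _ => hpos x y') (Finset.mem_univ y)
      _ = 1 := hsum x
  have hhint : Integrable (fun z : ↥Xs × Fin K => h z.1 z.2) pstar :=
    Integrable.mono' (integrable_const 1) hhmeas.aestronglyMeasurable
      (ae_of_all _ fun z => by
        rw [Real.norm_eq_abs, abs_le]
        exact ⟨by linarith [hpos z.1 z.2], hle1 z.1 z.2⟩)
  -- compute loss
  have hloss : loss h pstar = 1 - ∫ z, h z.1 z.2 ∂pstar := by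
    rw [loss, integral_sub (integrable_const 1) hhint, integral_const]
    simp
  -- lower bound on ∫ h
  have hint_ge : (∑ i, τinf i * μs i) - φ ≤ ∫ z, h z.1 z.2 ∂pstar := by
    have h1 : ∫ z, ((∑ i, Φ z i * μs i) - φ) ∂pstar ≤ ∫ z, h z.1 z.2 ∂pstar :=
      integral_mono (hgint.sub (integrable_const φ)) hhint
        (fun z => hge z.1 z.2)
    have h2 : ∫ z, ((∑ i, Φ z i * μs i) - φ) ∂pstar
        = (∑ i, τinf i * μs i) - φ := by
      rw [integral_sub hgint (integrable_const φ), integral_const,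
        integral_finset_sum _ fun i _ => (hΦint i).mul_const _]
      simp [hτinf, integral_mul_const]
    linarith
  -- componentwise bound
  have hcomp : ∑ i, (τ i - τinf i) * μs i ≤ ∑ i, |τinf i - τ i| * |μs i| := by
    apply Finset.sum_le_sum
    intro i _
    calc (τ i - τinf i) * μs i ≤ |(τ i - τinf i) * μs i| := le_abs_self _
      _ = |τinf i - τ i| * |μs i| := by rw [abs_mul, abs_sub_comm]
  have hsum1 : ∑ i, (τ i - τinf i) * μs i
      = (∑ i, τ i * μs i) - ∑ i, τinf i * μs i := by
    rw [← Finset.sum_sub_distrib]; congr 1; ext i; ring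
  have hsum2 : ∑ i, (|τinf i - τ i| - lam i) * |μs i|
      = (∑ i, |τinf i - τ i| * |μs i|) - ∑ i, lam i * |μs i| := by
    rw [← Finset.sum_sub_distrib]; congr 1; ext i; ring
  rw [hloss]
  linarith

end
end

section
/- (Theorem 6, bound (15)) Let p* be a Borel probability distribution on X×Y with feature expectation τ_∞ = E_{p*}{Φ}, let μ* be a minimizer of min_{μ ∈ ℝ^m} 1 − τᵀμ + φ(μ) + λᵀ|μ|, and let h^U be a classification rule satisfying h^U(y|x) ≥ Φ(x,y)ᵀμ* − φ(μ*) for all x ∈ X and y ∈ Y. Let μ̲ be a maximizer of sup_{μ ∈ ℝ^m} [ 1 − τᵀμ + inf_{(x,y) ∈ X×Y}{Φ(x,y)ᵀμ − h^U(y|x)} − λᵀ|μ| ], with optimal value R_(U). Then the error probability R(h^U) = ℓ(h^U,p*) satisfies R(h^U) ≥ R_(U) − (|τ_∞ − τ| − λ)ᵀ|μ̲|. -/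
open MeasureTheory

noncomputable section

/-- Theorem 6, bound (15): `R(h^U) ≥ R_(U) − (|τ_∞ − τ| − λ)ᵀ|μ̲|`. -/
theorem stmt_11 {d K m : ℕ} (hK : 0 < K)
    (Xs : Set (Fin d → ℝ)) (hXs : MeasurableSet Xs)
    (Φ : ↥Xs × Fin K → Fin m → ℝ) (hΦmeas : ∀ i, Measurable fun z => Φ z i)
    (B : ℝ) (hΦbdd : ∀ z i, |Φ z i| ≤ B)
    (τ lam : Fin m → ℝ)
    (pstar : Measure (↥Xs × Fin K)) (hpstar : IsProbabilityMeasure pstar)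
    (τinf : Fin m → ℝ) (hτinf : ∀ i, τinf i = ∫ z, Φ z i ∂pstar)
    (μs : Fin m → ℝ)
    (hμs : ∀ μ : Fin m → ℝ,
      1 - (∑ i, τ i * μs i) + phi Φ μs + ∑ i, lam i * |μs i| ≤
      1 - (∑ i, τ i * μ i) + phi Φ μ + ∑ i, lam i * |μ i|)
    (h : ↥Xs → Fin K → ℝ) (hrule : IsRule Xs h)
    (hge : ∀ (x : ↥Xs) (y : Fin K), (∑ i, Φ (x, y) i * μs i) - phi Φ μs ≤ h x y)
    (μlow : Fin m → ℝ)
    (hμlow : ∀ μ : Fin m → ℝ, Dlow Φ τ lam h μ ≤ Dlow Φ τ lam h μlow) :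
    Dlow Φ τ lam h μlow - ∑ i, (|τinf i - τ i| - lam i) * |μlow i|
      ≤ loss h pstar := by
  simp only [Dlow, loss]
  obtain ⟨hpos, hsum, hmeas⟩ := hrule
  have hne : Nonempty (↥Xs × Fin K) := by
    by_contra hempty
    rw [not_nonempty_iff] at hempty
    have h1 := hpstar.measure_univ
    rw [Set.univ_eq_empty_iff.mpr hempty] at h1
    simp at h1
  set f : ↥Xs × Fin K → ℝ := fun z => (∑ i, Φ z i * μlow i) - h z.1 z.2 with hf
  have hh1 : ∀ x y, h x y ≤ 1 := fun x y => by
    calc h x y ≤ ∑ y', h x y' :=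
          Finset.single_le_sum (fun y' _ => hpos x y') (Finset.mem_univ y)
      _ = 1 := hsum x
  set C : ℝ := ∑ i, B * |μlow i| with hC
  have hsumb : ∀ z, |∑ i, Φ z i * μlow i| ≤ C := fun z => by
    calc |∑ i, Φ z i * μlow i| ≤ ∑ i, |Φ z i * μlow i| := Finset.abs_sum_le_sum_abs _ _
      _ ≤ C := Finset.sum_le_sum fun i _ => by
          rw [abs_mul]
          exact mul_le_mul_of_nonneg_right (hΦbdd z i) (abs_nonneg _)
  have hfb : ∀ z, |f z| ≤ C + 1 := fun z => by
    have h1 := hsumb z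
    have h2 := hpos z.1 z.2
    have h3 := hh1 z.1 z.2
    simp only [hf]
    rw [abs_le] at h1 ⊢
    constructor <;> linarith
  have hhmeas : Measurable fun z : ↥Xs × Fin K => h z.1 z.2 :=
    measurable_from_prod_countable_left fun y => hmeas y
  have hfmeas : Measurable f :=
    (Finset.measurable_sum _ fun i _ => (hΦmeas i).mul_const _).sub hhmeas
  have hΦint : ∀ i, Integrable (fun z => Φ z i) pstar := fun i =>
    (integrable_const B).mono' (hΦmeas i).aestronglyMeasurable
      (ae_of_all _ fun z => hΦbdd z i)
  have hsumint : Integrable (fun z => ∑ i, Φ z i * μlow i) pstar :=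
    integrable_finset_sum _ fun i _ => (hΦint i).mul_const _
  have hhint : Integrable (fun z : ↥Xs × Fin K => h z.1 z.2) pstar :=
    (integrable_const 1).mono' hhmeas.aestronglyMeasurable
      (ae_of_all _ fun z => by
        rw [Real.norm_eq_abs, abs_of_nonneg (hpos z.1 z.2)]; exact hh1 z.1 z.2)
  have hfint : Integrable f pstar := hsumint.sub hhint
  have hbdd : BddBelow (Set.range f) := by
    refine ⟨-(C + 1), ?_⟩
    rintro _ ⟨z, rfl⟩
    have := (abs_le.mp (hfb z)).1
    linarith
  have hinf_le : ∀ z, (⨅ z, f z) ≤ f z := fun z => ciInf_le hbdd z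
  have h1 : (⨅ z, f z) ≤ ∫ z, f z ∂pstar := by
    have := integral_mono (μ := pstar) (integrable_const (⨅ z, f z)) hfint hinf_le
    simpa [integral_const, hpstar.measure_univ] using this
  have h2 : ∫ z, f z ∂pstar = (∑ i, τinf i * μlow i) - ∫ z, h z.1 z.2 ∂pstar := by
    rw [integral_sub hsumint hhint, integral_finset_sum _ (fun i _ => (hΦint i).mul_const _)]
    congr 1
    refine Finset.sum_congr rfl fun i _ => ?_
    rw [integral_mul_const, hτinf i]
  have hloss : ∫ z, (1 - h z.1 z.2) ∂pstar = 1 - ∫ z, h z.1 z.2 ∂pstar := by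
    rw [integral_sub (integrable_const 1) hhint, integral_const]
    simp [hpstar.measure_univ]
  have hcross : ∑ i, τinf i * μlow i ≤
      ∑ i, τ i * μlow i + ∑ i, |τinf i - τ i| * |μlow i| := by
    rw [← Finset.sum_add_distrib]
    refine Finset.sum_le_sum fun i _ => ?_
    have := le_abs_self ((τinf i - τ i) * μlow i)
    rw [abs_mul] at this
    linarith
  have hsplit : ∑ i, (|τinf i - τ i| - lam i) * |μlow i| =
      ∑ i, |τinf i - τ i| * |μlow i| - ∑ i, lam i * |μlow i| := by
    rw [← Finset.sum_sub_distrib]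
    exact Finset.sum_congr rfl fun i _ => sub_mul _ _ _
  rw [hloss]
  linarith

end
end

section
/- (Theorem 6, bounds (17)-(18)) Let p* be a Borel probability distribution on X×Y with feature expectation τ_∞ = E_{p*}{Φ}, and suppose |τ_∞ − τ| ⪯ λ componentwise. Let μ* be a minimizer of min_{μ ∈ ℝ^m} 1 − τᵀμ + φ(μ) + λᵀ|μ| with optimal value R̄(U), let μ_∞ be a minimizer of min_{μ ∈ ℝ^m} 1 − τ_∞ᵀμ + φ(μ) with optimal value R_Φ, let h^U be a classification rule satisfying h^U(y|x) ≥ Φ(x,y)ᵀμ* − φ(μ*) for all x ∈ X and y ∈ Y, and let R_(U) = sup_{μ ∈ ℝ^m} [ 1 − τᵀμ + inf_{(x,y) ∈ X×Y}{Φ(x,y)ᵀμ − h^U(y|x)} − λᵀ|μ| ], assumed attained at some μ̲. Then the error probability R(h^U) = ℓ(h^U,p*) satisfies R_(U) ≤ R(h^U) ≤ R̄(U) and R(h^U) ≤ R_Φ + 2 λᵀ|μ_∞| ≤ R_Φ + 2 ‖λ‖_∞ ‖μ_∞‖_1. -/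
open MeasureTheory

noncomputable section

/-- Theorem 6, bounds (17)-(18): when `|τ_∞ − τ| ⪯ λ`,
`R_(U) ≤ R(h^U) ≤ R̄(U)` and `R(h^U) ≤ R_Φ + 2λᵀ|μ_∞| ≤ R_Φ + 2‖λ‖_∞‖μ_∞‖₁`. -/
theorem stmt_13 {d K m : ℕ} (hK : 0 < K)
    (Xs : Set (Fin d → ℝ)) (hXs : MeasurableSet Xs)
    (Φ : ↥Xs × Fin K → Fin m → ℝ) (hΦmeas : ∀ i, Measurable fun z => Φ z i)
    (B : ℝ) (hΦbdd : ∀ z i, |Φ z i| ≤ B)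
    (τ lam : Fin m → ℝ)
    (pstar : Measure (↥Xs × Fin K)) (hpstar : IsProbabilityMeasure pstar)
    (τinf : Fin m → ℝ) (hτinf : ∀ i, τinf i = ∫ z, Φ z i ∂pstar)
    (hcov : ∀ i, |τinf i - τ i| ≤ lam i)
    (μs : Fin m → ℝ)
    (hμs : ∀ μ : Fin m → ℝ,
      1 - (∑ i, τ i * μs i) + phi Φ μs + ∑ i, lam i * |μs i| ≤
      1 - (∑ i, τ i * μ i) + phi Φ μ + ∑ i, lam i * |μ i|)
    (μinf : Fin m → ℝ)
    (hμinf : ∀ μ : Fin m → ℝ,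
      1 - (∑ i, τinf i * μinf i) + phi Φ μinf ≤
      1 - (∑ i, τinf i * μ i) + phi Φ μ)
    (h : ↥Xs → Fin K → ℝ) (hrule : IsRule Xs h)
    (hge : ∀ (x : ↥Xs) (y : Fin K), (∑ i, Φ (x, y) i * μs i) - phi Φ μs ≤ h x y)
    (μlow : Fin m → ℝ)
    (hμlow : ∀ μ : Fin m → ℝ, Dlow Φ τ lam h μ ≤ Dlow Φ τ lam h μlow) :
    (Dlow Φ τ lam h μlow ≤ loss h pstar ∧
      loss h pstar ≤ 1 - (∑ i, τ i * μs i) + phi Φ μs + ∑ i, lam i * |μs i|) ∧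
    loss h pstar
      ≤ (1 - (∑ i, τinf i * μinf i) + phi Φ μinf) + 2 * ∑ i, lam i * |μinf i| ∧
    (1 - (∑ i, τinf i * μinf i) + phi Φ μinf) + 2 * ∑ i, lam i * |μinf i|
      ≤ (1 - (∑ i, τinf i * μinf i) + phi Φ μinf) + 2 * ‖lam‖ * ∑ i, |μinf i| := by
  haveI := hpstar
  -- nonempty
  have hne : Nonempty (↥Xs × Fin K) := by
    by_contra hempty
    have he : IsEmpty (↥Xs × Fin K) := not_nonempty_iff.mp hempty
    have := hpstar.measure_univ
    rw [Set.univ_eq_empty_iff.mpr he] at this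
    simp at this
  -- measurability of h as function of z
  have hmeas_h : Measurable fun z : ↥Xs × Fin K => h z.1 z.2 := by
    exact measurable_from_prod_countable_left (fun y => hrule.2.2 y)
  -- h bounded in [0,1]
  have h01 : ∀ x y, h x y ≤ 1 := by
    intro x y
    have := hrule.2.1 x
    calc h x y ≤ ∑ y', h x y' :=
          Finset.single_le_sum (fun i _ => hrule.1 x i) (Finset.mem_univ y)
      _ = 1 := this
  -- integrabilities
  have hint_h : Integrable (fun z : ↥Xs × Fin K => h z.1 z.2) pstar := by
    refine (integrable_const (1:ℝ)).mono' hmeas_h.aestronglyMeasurable ?_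
    filter_upwards with z
    rw [Real.norm_eq_abs, abs_le]
    exact ⟨by linarith [hrule.1 z.1 z.2], h01 z.1 z.2⟩
  have hint_Φ : ∀ i, Integrable (fun z : ↥Xs × Fin K => Φ z i) pstar := by
    intro i
    refine (integrable_const B).mono' (hΦmeas i).aestronglyMeasurable ?_
    filter_upwards with z
    rw [Real.norm_eq_abs]; exact hΦbdd z i
  have hint_sum : ∀ μ : Fin m → ℝ,
      Integrable (fun z : ↥Xs × Fin K => ∑ i, Φ z i * μ i) pstar := by
    intro μ
    exact integrable_finset_sum _ (fun i _ => (hint_Φ i).mul_const (μ i))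
  have hkey : ∀ μ : Fin m → ℝ,
      ∫ z, (∑ i, Φ z i * μ i) ∂pstar = ∑ i, τinf i * μ i := by
    intro μ
    rw [integral_finset_sum _ (fun i _ => (hint_Φ i).mul_const (μ i))]
    refine Finset.sum_congr rfl (fun i _ => ?_)
    rw [integral_mul_const, hτinf i]
  -- covariate shift inequality
  have hshift : ∀ μ : Fin m → ℝ,
      ∑ i, (τinf i - τ i) * μ i ≤ ∑ i, lam i * |μ i| := by
    intro μ
    refine Finset.sum_le_sum (fun i _ => ?_)
    calc (τinf i - τ i) * μ i ≤ |(τinf i - τ i) * μ i| := le_abs_self _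
      _ = |τinf i - τ i| * |μ i| := abs_mul _ _
      _ ≤ lam i * |μ i| := mul_le_mul_of_nonneg_right (hcov i) (abs_nonneg _)
  have hshift' : ∀ μ : Fin m → ℝ,
      ∑ i, (τ i - τinf i) * μ i ≤ ∑ i, lam i * |μ i| := by
    intro μ
    have := hshift (fun i => -μ i)
    simp only [abs_neg, mul_neg, neg_mul] at this
    calc ∑ i, (τ i - τinf i) * μ i = ∑ i, -((τinf i - τ i) * μ i) := by
          refine Finset.sum_congr rfl (fun i _ => ?_); ring
      _ ≤ ∑ i, lam i * |μ i| := this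
  -- loss = 1 - ∫ h
  have hloss : loss h pstar = 1 - ∫ z, h z.1 z.2 ∂pstar := by
    unfold loss
    rw [integral_sub (integrable_const 1) hint_h, integral_const]
    simp
  -- upper bound
  have hub : loss h pstar ≤ 1 - (∑ i, τinf i * μs i) + phi Φ μs := by
    have hpt : ∀ z : ↥Xs × Fin K,
        (1 : ℝ) - h z.1 z.2 ≤ 1 - (∑ i, Φ z i * μs i) + phi Φ μs := by
      intro z
      have := hge z.1 z.2
      linarith
    have hint1 : Integrable (fun z : ↥Xs × Fin K => 1 - h z.1 z.2) pstar :=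
      (integrable_const 1).sub hint_h
    have hint2 : Integrable
        (fun z : ↥Xs × Fin K => 1 - (∑ i, Φ z i * μs i) + phi Φ μs) pstar :=
      ((integrable_const 1).sub (hint_sum μs)).add (integrable_const _)
    have := integral_mono hint1 hint2 hpt
    calc loss h pstar = ∫ z, (1 - h z.1 z.2) ∂pstar := rfl
      _ ≤ ∫ z, (1 - (∑ i, Φ z i * μs i) + phi Φ μs) ∂pstar := this
      _ = 1 - (∑ i, τinf i * μs i) + phi Φ μs := by
          have heq : (fun z : ↥Xs × Fin K => 1 - (∑ i, Φ z i * μs i) + phi Φ μs)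
              = fun z => (1 + phi Φ μs) - (∑ i, Φ z i * μs i) := by
            funext z; ring
          rw [heq, integral_sub (integrable_const _) (hint_sum μs), integral_const, hkey μs]
          simp
          ring
  have hubR : loss h pstar ≤
      1 - (∑ i, τ i * μs i) + phi Φ μs + ∑ i, lam i * |μs i| := by
    have := hshift' μs
    have h2 : ∑ i, τ i * μs i - ∑ i, τinf i * μs i ≤ ∑ i, lam i * |μs i| := by
      rw [← Finset.sum_sub_distrib]
      calc ∑ i, (τ i * μs i - τinf i * μs i) = ∑ i, (τ i - τinf i) * μs i := by
            refine Finset.sum_congr rfl (fun i _ => ?_); ring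
        _ ≤ ∑ i, lam i * |μs i| := this
    linarith
  -- lower bound
  have hlb : Dlow Φ τ lam h μlow ≤ loss h pstar := by
    set f : ↥Xs × Fin K → ℝ := fun z => (∑ i, Φ z i * μlow i) - h z.1 z.2 with hf
    have hbdd : BddBelow (Set.range f) := by
      refine ⟨-(∑ i, B * |μlow i|) - 1, ?_⟩
      rintro _ ⟨z, rfl⟩
      have h1 : -(∑ i, B * |μlow i|) ≤ ∑ i, Φ z i * μlow i := by
        rw [← Finset.sum_neg_distrib]
        refine Finset.sum_le_sum (fun i _ => ?_)
        have h3 : |Φ z i * μlow i| ≤ B * |μlow i| := by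
          rw [abs_mul]
          exact mul_le_mul_of_nonneg_right (hΦbdd z i) (abs_nonneg _)
        have := neg_abs_le (Φ z i * μlow i)
        linarith
      have := h01 z.1 z.2
      simp only [hf]
      linarith
    have hintf : Integrable f pstar := (hint_sum μlow).sub hint_h
    have hinf_le : (⨅ z, f z) ≤ ∫ z, f z ∂pstar := by
      have hle : ∀ z, (⨅ z', f z') ≤ f z := fun z => ciInf_le hbdd z
      calc (⨅ z, f z) = ∫ _, (⨅ z', f z') ∂pstar := by
            rw [integral_const]; simp
        _ ≤ ∫ z, f z ∂pstar := integral_mono (integrable_const _) hintf hle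
    have hintval : ∫ z, f z ∂pstar =
        (∑ i, τinf i * μlow i) - ∫ z, h z.1 z.2 ∂pstar := by
      rw [integral_sub (hint_sum μlow) hint_h, hkey μlow]
    have hs := hshift μlow
    have h2 : ∑ i, τinf i * μlow i - ∑ i, τ i * μlow i ≤ ∑ i, lam i * |μlow i| := by
      rw [← Finset.sum_sub_distrib]
      calc ∑ i, (τinf i * μlow i - τ i * μlow i)
            = ∑ i, (τinf i - τ i) * μlow i := by
            refine Finset.sum_congr rfl (fun i _ => ?_); ring
        _ ≤ ∑ i, lam i * |μlow i| := hs
    have : Dlow Φ τ lam h μlow =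
        1 - (∑ i, τ i * μlow i) + (⨅ z, f z) - ∑ i, lam i * |μlow i| := rfl
    rw [this, hloss]
    have := hinf_le
    rw [hintval] at this
    linarith
  -- second bound
  have hb2 : loss h pstar ≤
      (1 - (∑ i, τinf i * μinf i) + phi Φ μinf) + 2 * ∑ i, lam i * |μinf i| := by
    have h1 := hμs μinf
    have h2 : ∑ i, τinf i * μinf i - ∑ i, τ i * μinf i ≤ ∑ i, lam i * |μinf i| := by
      rw [← Finset.sum_sub_distrib]
      calc ∑ i, (τinf i * μinf i - τ i * μinf i)
            = ∑ i, (τinf i - τ i) * μinf i := by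
            refine Finset.sum_congr rfl (fun i _ => ?_); ring
        _ ≤ ∑ i, lam i * |μinf i| := hshift μinf
    linarith
  -- third bound
  have hb3 : ∑ i, lam i * |μinf i| ≤ ‖lam‖ * ∑ i, |μinf i| := by
    rw [Finset.mul_sum]
    refine Finset.sum_le_sum (fun i _ => ?_)
    have h1 : lam i ≤ ‖lam‖ := by
      calc lam i ≤ |lam i| := le_abs_self _
        _ = ‖lam i‖ := rfl
        _ ≤ ‖lam‖ := norm_le_pi_norm lam i
    exact mul_le_mul_of_nonneg_right h1 (abs_nonneg _)
  refine ⟨⟨hlb, hubR⟩, hb2, ?_⟩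
  have : 2 * ∑ i, lam i * |μinf i| ≤ 2 * ‖lam‖ * ∑ i, |μinf i| := by
    rw [mul_assoc]; linarith
  linarith

end
end

section
/- For every μ ∈ ℝ^m and every x ∈ X, the positive parts of the affine transform of the feature mapping with offset φ(μ,x) sum exactly to one over the labels: ∑_{y ∈ Y} max(Φ(x,y)ᵀμ − φ(μ,x), 0) = 1. -/
open MeasureTheory

noncomputable section

/-!
Write `a y = Φ(x,y)ᵀμ` and `g C = (∑_{y∈C} a y - 1)/|C|`, so that `∑_{y∈C} (a y - g C) = 1`.
The sum of positive parts `∑_y (a y - t)₊` is the largest of the sums `∑_{y∈S} (a y - t)` over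
subsets `S`. For `t = g C₀ = max_C g C`, every such sum over a nonempty `S` is at most
`∑_{y∈S} (a y - g S) = 1`, and the sum over `C₀` equals `1`.
-/

open Finset

theorem Finset.sum_sub_div_card_eq_one {ι : Type*} {S : Finset ι} (hS : S.Nonempty)
    (a : ι → ℝ) :
    ∑ y ∈ S, (a y - ((∑ z ∈ S, a z) - 1) / #S) = 1 := by
  have hcard : (#S : ℝ) ≠ 0 := by exact_mod_cast hS.card_pos.ne'
  rw [sum_sub_distrib, sum_const, nsmul_eq_mul]
  field_simp
  ring

variable {ι : Type*} [Fintype ι]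

theorem Finset.sum_le_sum_max_zero (b : ι → ℝ) (S : Finset ι) :
    ∑ y ∈ S, b y ≤ ∑ y, max (b y) 0 :=
  calc ∑ y ∈ S, b y ≤ ∑ y ∈ S, max (b y) 0 := sum_le_sum fun _ _ => le_max_left _ _
    _ ≤ ∑ y, max (b y) 0 :=
      sum_le_sum_of_subset_of_nonneg (subset_univ S) fun _ _ _ => le_max_right _ _

theorem Finset.sum_max_zero_eq_sum_filter (b : ι → ℝ) :
    ∑ y, max (b y) 0 = ∑ y with 0 < b y, b y := by
  rw [sum_filter]
  refine sum_congr rfl fun y _ => ?_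
  split_ifs with hy
  · exact max_eq_left hy.le
  · exact max_eq_right (not_lt.mp hy)

theorem sum_max_sub_iSup_eq_one [Nonempty ι] (a : ι → ℝ) :
    ∑ y, max (a y - ⨆ C : {C : Finset ι // C.Nonempty}, ((∑ z ∈ C.1, a z) - 1) / #C.1) 0
      = 1 := by
  set g : {C : Finset ι // C.Nonempty} → ℝ := fun C => ((∑ z ∈ C.1, a z) - 1) / #C.1
  have : Nonempty {C : Finset ι // C.Nonempty} := ⟨⟨univ, univ_nonempty⟩⟩
  obtain ⟨C₀, hC₀⟩ := Finite.exists_max g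
  have hsup : ⨆ C, g C = g C₀ :=
    le_antisymm (ciSup_le hC₀) (le_ciSup (Set.finite_range g).bddAbove C₀)
  rw [hsup]
  apply le_antisymm
  · rw [sum_max_zero_eq_sum_filter]
    rcases (univ.filter fun y => 0 < a y - g C₀).eq_empty_or_nonempty with hS | hS
    · rw [hS, sum_empty]
      exact zero_le_one
    · calc _ ≤ ∑ y ∈ univ with 0 < a y - g C₀, (a y - g ⟨_, hS⟩) :=
            sum_le_sum fun y _ => by linarith [hC₀ ⟨_, hS⟩]
        _ = 1 := sum_sub_div_card_eq_one hS a
  · calc (1 : ℝ) = ∑ y ∈ C₀.1, (a y - g C₀) := (sum_sub_div_card_eq_one C₀.2 a).symm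
      _ ≤ _ := sum_le_sum_max_zero _ _

theorem stmt_15_general {d K m : ℕ} (hK : 0 < K)
    (Xs : Set (Fin d → ℝ))
    (Φ : ↥Xs × Fin K → Fin m → ℝ) :
    ∀ (μ : Fin m → ℝ) (x : ↥Xs),
      ∑ y : Fin K, max ((∑ i, Φ (x, y) i * μ i) - phix Φ μ x) 0 = 1 := by
  have : Nonempty (Fin K) := ⟨⟨0, hK⟩⟩
  intro μ x
  exact sum_max_sub_iSup_eq_one fun y => ∑ i, Φ (x, y) i * μ i

/-- The positive parts `(Φ(x,y)ᵀμ − φ(μ,x))₊` sum exactly to one over labels. -/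
theorem stmt_15 {d K m : ℕ} (hK : 0 < K)
    (Xs : Set (Fin d → ℝ)) (hXs : MeasurableSet Xs)
    (Φ : ↥Xs × Fin K → Fin m → ℝ) (hΦmeas : ∀ i, Measurable fun z => Φ z i)
    (B : ℝ) (hΦbdd : ∀ z i, |Φ z i| ≤ B) :
    ∀ (μ : Fin m → ℝ) (x : ↥Xs),
      ∑ y : Fin K, max ((∑ i, Φ (x, y) i * μ i) - phix Φ μ x) 0 = 1 :=
  stmt_15_general hK Xs Φ

end
end

section
/- (Theorem 10, key invariant of the efficient accelerated subgradient method) Let F ∈ ℝ^{p×m}, a ∈ ℝ^m, b ∈ ℝ^p, λ ∈ ℝ^m, step sizes c_k ∈ ℝ and extrapolation coefficients η_k ∈ ℝ for k ≥ 1, and a selection rule i(μ) ∈ argmax(Fμ + b) for each μ ∈ ℝ^m. Define Algorithm 1 iterates by y_1 = μ_1 ∈ ℝ^m, y_{k+1} = μ_k − c_k g_k, μ_{k+1} = (1+η_k) y_{k+1} − η_k y_k, where g_k = a + λ⊙sign(μ_k) + col_{i_k}(Fᵀ) and i_k = i(μ_k). Define Algorithm 2 auxiliary iterates by v_1 = w_1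 = Fμ_1 + b, u_k = Fa + F·diag(λ)·sign(μ_k) + col_{i_k}(FFᵀ), w_{k+1} = v_k − c_k u_k, v_{k+1} = (1+η_k) w_{k+1} − η_k w_k. Then for every k ≥ 1, v_k = Fμ_k + b and w_k = F y_k + b; in particular, i_k may equivalently be computed as argmax v_k, so Algorithms 1 and 2 generate identical parameter sequences {μ_k}. -/
noncomputable section

lemma mulVec_key {p m : ℕ} (F : Matrix (Fin p) (Fin m) ℝ) (a : Fin m → ℝ)
    (lam s : Fin m → ℝ) (j : Fin p) :
    F.mulVec (a + (fun i => lam i * s i) + (fun i => F j i))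
      = F.mulVec a + (F * Matrix.diagonal lam).mulVec s + (fun r => (F * F.transpose) r j) := by
  funext r
  simp [Matrix.mulVec, dotProduct, Matrix.mul_apply, Matrix.diagonal, Pi.add_apply,
    Finset.sum_add_distrib, Finset.sum_mul, mul_add, Matrix.transpose_apply, mul_assoc]

/-- Theorem 10 (key invariant of the efficient accelerated subgradient method):
Algorithm 2's auxiliary iterates satisfy `v_k = Fμ_k + b` and `w_k = F y_k + b` for all
`k ≥ 1`, so the index `i_k` may equivalently be computed as `argmax v_k` and Algorithms 1
and 2 generate identical parameter sequences. -/
theorem stmt_19 {p m : ℕ}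
    (F : Matrix (Fin p) (Fin m) ℝ) (a : Fin m → ℝ) (b : Fin p → ℝ) (lam : Fin m → ℝ)
    (c η : ℕ → ℝ)
    (jsel : (Fin p → ℝ) → Fin p) (hjsel : ∀ (v : Fin p → ℝ) (j : Fin p), v j ≤ v (jsel v))
    (μ0 : Fin m → ℝ)
    -- Algorithm 1 iterates
    (μ1 y1 : ℕ → Fin m → ℝ)
    (hμ1init : μ1 1 = μ0) (hy1init : y1 1 = μ0)
    (hy1 : ∀ k, 1 ≤ k → y1 (k + 1)
      = μ1 k - c k • (a + (fun i => lam i * Real.sign (μ1 k i))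
          + (fun i => F (jsel (F.mulVec (μ1 k) + b)) i)))
    (hμ1 : ∀ k, 1 ≤ k → μ1 (k + 1) = (1 + η k) • y1 (k + 1) - η k • y1 k)
    -- Algorithm 2 iterates
    (μ2 y2 : ℕ → Fin m → ℝ) (v2 w2 : ℕ → Fin p → ℝ)
    (hμ2init : μ2 1 = μ0) (hy2init : y2 1 = μ0)
    (hv2init : v2 1 = F.mulVec μ0 + b) (hw2init : w2 1 = F.mulVec μ0 + b)
    (hy2 : ∀ k, 1 ≤ k → y2 (k + 1)
      = μ2 k - c k • (a + (fun i => lam i * Real.sign (μ2 k i))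
          + (fun i => F (jsel (v2 k)) i)))
    (hμ2 : ∀ k, 1 ≤ k → μ2 (k + 1) = (1 + η k) • y2 (k + 1) - η k • y2 k)
    (hw2 : ∀ k, 1 ≤ k → w2 (k + 1)
      = v2 k - c k • (F.mulVec a
          + (F * Matrix.diagonal lam).mulVec (fun i => Real.sign (μ2 k i))
          + (fun r => (F * F.transpose) r (jsel (v2 k)))))
    (hv2 : ∀ k, 1 ≤ k → v2 (k + 1) = (1 + η k) • w2 (k + 1) - η k • w2 k) :
    ∀ k, 1 ≤ k →
      v2 k = F.mulVec (μ2 k) + b ∧ w2 k = F.mulVec (y2 k) + b ∧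
      μ2 k = μ1 k ∧ y2 k = y1 k := by
  intro k hk
  induction k, hk using Nat.le_induction with
  | base =>
    refine ⟨by rw [hv2init, hμ2init], by rw [hw2init, hy2init], by rw [hμ2init, hμ1init],
      by rw [hy2init, hy1init]⟩
  | succ k hk ih =>
    obtain ⟨hv, hw, hμ, hy⟩ := ih
    have hynew : y2 (k + 1) = y1 (k + 1) := by
      rw [hy2 k hk, hy1 k hk, hμ, hv, hμ]
    have hμnew : μ2 (k + 1) = μ1 (k + 1) := by
      rw [hμ2 k hk, hμ1 k hk, hynew, hy]
    have hwnew : w2 (k + 1) = F.mulVec (y2 (k + 1)) + b := by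
      rw [hw2 k hk, hy2 k hk, hv, ← mulVec_key, Matrix.mulVec_sub, Matrix.mulVec_smul]
      abel
    have hvnew : v2 (k + 1) = F.mulVec (μ2 (k + 1)) + b := by
      rw [hv2 k hk, hμ2 k hk, hwnew, hw, Matrix.mulVec_sub, Matrix.mulVec_smul,
        Matrix.mulVec_smul]
      funext r
      simp only [Pi.sub_apply, Pi.add_apply, Pi.smul_apply, smul_eq_mul]
      ring
    exact ⟨hvnew, hwnew, hμnew, hynew⟩

end
end
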